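/- arXiv:math/0010005 — 6 statements merged into one kernel-verified Lean document; each statement's English description precedes it below -/
import Mathlib

section
/- In the algebra B_d, one has binom(H1, b1)·binom(H2, b2) = 0 whenever b1 + b2 ≥ d+1, where binom(T,m) = T(T-1)···(T-m+1)/m!. -/
/-- The binomial-coefficient element `binom(x, m) = x(x-1)⋯(x-m+1)/m!` of a
`ℚ`-algebra. -/
noncomputable def abinom {A : Type*} [Ring A] [Algebra ℚ A] (x : A) (m : ℕ) : A :=
  ((m.factorial : ℚ)⁻¹) • ((List.range m).map (fun i : ℕ => x - (i : A))).prod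

open Polynomial

lemma listprod_eq_finprod {M : Type*} [CommMonoid M] (f : ℕ → M) (n : ℕ) :
    ((List.range n).map f).prod = ∏ i ∈ Finset.range n, f i := by
  induction n with
  | zero => simp
  | succ n ih =>
      rw [List.range_succ, Finset.prod_range_succ, List.map_append, List.prod_append, ih]
      simp

/-- In `B_d`, `binom(H1, b1) · binom(H2, b2) = 0` whenever `b1 + b2 ≥ d + 1`. -/
theorem Bd_binom_H1_mul_binom_H2 (d : ℕ) (A : Type*) [Ring A] [Algebra ℚ A]
    (e f H1 H2 : A)
    (h12 : H1 * H2 = H2 * H1)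
    (h1e : H1 * e - e * H1 = e) (h1f : H1 * f - f * H1 = -f)
    (h2e : H2 * e - e * H2 = -e) (h2f : H2 * f - f * H2 = f)
    (hef : e * f - f * e = H1 - H2)
    (hsum : H1 + H2 = (d : A))
    (hmin : ((List.range (d + 1)).map (fun i : ℕ => H1 - (i : A))).prod = 0)
    (b1 b2 : ℕ) (hb : d + 1 ≤ b1 + b2) :
    abinom H1 b1 * abinom H2 b2 = 0 := by
  classical
  have hH2 : H2 = (d : A) - H1 := eq_sub_of_add_eq' hsum
  set φ : ℚ[X] →ₐ[ℚ] A := Polynomial.aeval H1 with hφ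
  set p1 : ℚ[X] := ∏ i ∈ Finset.range b1, (X - C (i : ℚ)) with hp1
  set q2 : ℚ[X] := ∏ j ∈ Finset.range b2, (X - C ((d : ℚ) - (j : ℚ))) with hq2
  set m : ℚ[X] := ∏ i ∈ Finset.range (d + 1), (X - C (i : ℚ)) with hm
  -- m divides p1 * q2
  have hmdvd : m ∣ p1 * q2 := by
    apply Finset.prod_dvd_of_coprime
    · exact (Polynomial.pairwise_coprime_X_sub_C (Nat.cast_injective (R := ℚ))).set_pairwise _
    · intro i hi
      rcases lt_or_ge i b1 with h | h
      · exact (Finset.dvd_prod_of_mem _ (Finset.mem_range.2 h)).mul_right _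
      · have hid : i ≤ d := Nat.lt_succ_iff.1 (Finset.mem_range.1 hi)
        have hj : d - i < b2 := by omega
        have heq : (X - C (i : ℚ)) = (X - C ((d : ℚ) - ((d - i : ℕ) : ℚ))) := by
          congr 1
          rw [Nat.cast_sub hid]
          ring
        rw [heq]
        exact (Finset.dvd_prod_of_mem _ (Finset.mem_range.2 hj)).mul_left _
  obtain ⟨r, hr⟩ := hmdvd
  -- φ of m is zero
  have hφfac : ∀ c : ℚ, φ (X - C c) = H1 - algebraMap ℚ A c := by
    intro c; simp [hφ]
  have hφm : φ m = 0 := by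
    rw [hm, ← listprod_eq_finprod, map_list_prod, List.map_map]
    rw [← hmin]
    congr 1
    apply List.map_congr_left
    intro i _
    simp [hφ]
  -- abinom H1 b1 = (b1!)⁻¹ • φ p1
  have h1 : abinom H1 b1 = ((b1.factorial : ℚ)⁻¹) • φ p1 := by
    rw [abinom, hp1, ← listprod_eq_finprod, map_list_prod, List.map_map]
    congr 2
    apply List.map_congr_left
    intro i _
    simp [hφ]
  -- abinom H2 b2 = (b2!)⁻¹ • φ ((-1)^b2 * q2)
  have h2 : abinom H2 b2 = ((b2.factorial : ℚ)⁻¹) • φ ((-1 : ℚ[X]) ^ b2 * q2) := by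
    have hq : ((-1 : ℚ[X]) ^ b2 * q2)
        = ((List.range b2).map (fun j : ℕ => -(X - C ((d : ℚ) - (j : ℚ))))).prod := by
      rw [listprod_eq_finprod, hq2,
        show ((-1 : ℚ[X]) ^ b2) = ∏ _j ∈ Finset.range b2, (-1 : ℚ[X]) by simp,
        ← Finset.prod_mul_distrib]
      exact Finset.prod_congr rfl (fun j _ => by ring)
    rw [abinom, hq, map_list_prod, List.map_map]
    congr 2
    apply List.map_congr_left
    intro j _
    simp only [Function.comp_apply, map_neg, map_sub, hφ, Polynomial.aeval_X, Polynomial.aeval_C,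
      map_sub, map_natCast]
    rw [hH2]
    abel
  rw [h1, h2, smul_mul_smul_comm, ← map_mul]
  have : p1 * ((-1 : ℚ[X]) ^ b2 * q2) = (-1 : ℚ[X]) ^ b2 * (m * r) := by
    rw [← hr]; ring
  rw [this, map_mul, map_mul, hφm]
  simp
end

section
/- In the algebra B_d, for any nonnegative integers a, b with a+b = d+1, one has f^a·binom(H2,b) = 0, binom(H2,b)·e^a = 0, e^a·binom(H1,b) = 0, and binom(H1,b)·f^a = 0. In particular e^{d+1} = 0 = f^{d+1}. -/
section Aux

variable {A : Type*} [Ring A]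

/-- Product `g 0 * g 1 * ⋯ * g (n-1)`. -/
def lprod (g : ℕ → A) (n : ℕ) : A := ((List.range n).map g).prod

lemma lp_zero (g : ℕ → A) : lprod g 0 = 1 := rfl

lemma lp_succ (g : ℕ → A) (n : ℕ) : lprod g (n + 1) = lprod g n * g n := by
  unfold lprod
  rw [List.range_succ, List.map_append, List.prod_append]
  simp

lemma lp_succ' (g : ℕ → A) (n : ℕ) :
    lprod g (n + 1) = g 0 * lprod (fun j => g (j + 1)) n := by
  unfold lprod
  rw [List.range_succ_eq_map, List.map_cons, List.prod_cons, List.map_map]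
  rfl

lemma lp_congr (g g' : ℕ → A) (n : ℕ) (h : ∀ j < n, g j = g' j) :
    lprod g n = lprod g' n := by
  unfold lprod
  congr 1
  apply List.map_congr_left
  intro j hj
  exact h j (List.mem_range.mp hj)

lemma lp_mul_comm (z : A) (g : ℕ → A) (n : ℕ) (h : ∀ j < n, z * g j = g j * z) :
    z * lprod g n = lprod g n * z := by
  induction n with
  | zero => simp [lp_zero]
  | succ n ih =>
    rw [lp_succ, ← mul_assoc, ih (fun j hj => h j (by omega)), mul_assoc,
      h n (by omega), ← mul_assoc]

lemma lp_rev (g : ℕ → A) (n : ℕ) (h : ∀ i j, g i * g j = g j * g i) :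
    lprod (fun j => g (n - 1 - j)) n = lprod g n := by
  induction n with
  | zero => rfl
  | succ n ih =>
    rw [lp_succ g n, ← ih, lp_succ']
    have e0 : (fun j => g (n + 1 - 1 - (j + 1))) = (fun j => g (n - 1 - j)) := by
      funext j; congr 1; omega
    have e1 : n + 1 - 1 - 0 = n := by omega
    rw [e0, e1]
    rw [lp_mul_comm (g n) (fun j => g (n - 1 - j)) n (fun j _ => h n (n - 1 - j))]

lemma lp_neg (g : ℕ → A) (n : ℕ) :
    lprod (fun j => -g j) n = (-1) ^ n * lprod g n := by
  induction n with
  | zero => simp [lp_zero]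
  | succ n ih =>
    rw [lp_succ, lp_succ, ih, pow_succ, mul_assoc, mul_assoc]
    congr 1
    rw [mul_neg, neg_one_mul]

lemma cast_sub_comm (x : A) (k m : ℕ) :
    (x - (k : A)) * (x - (m : A)) = (x - (m : A)) * (x - (k : A)) := by
  have h : Commute (x - (k : A)) (x - (m : A)) :=
    Commute.sub_left ((Commute.refl x).sub_right (Nat.cast_commute m x).symm)
      ((Nat.cast_commute k x).sub_right (Nat.cast_commute k (m : A)))
  exact h.eq

lemma lp_shift (x y : A) (hyx : y * x = (x - 1) * y) (c : ℕ → A)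
    (hc : ∀ j, y * c j = c j * y) (n : ℕ) :
    y * lprod (fun j => x - c j) n = lprod (fun j => x - c j - 1) n * y := by
  have hstep : ∀ j : ℕ, y * (x - c j) = (x - c j - 1) * y := by
    intro j
    rw [mul_sub, hyx, hc j, sub_mul (x - c j) 1 y, one_mul, sub_mul x 1 y, one_mul,
      sub_mul x (c j) y]
    abel
  induction n with
  | zero => simp [lp_zero]
  | succ n ih =>
    rw [lp_succ, lp_succ, ← mul_assoc, ih, mul_assoc, hstep n, ← mul_assoc]

lemma lp_shift' (x y : A) (hyx : y * x = (x + 1) * y) (c : ℕ → A)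
    (hc : ∀ j, y * c j = c j * y) (n : ℕ) :
    y * lprod (fun j => x - c j) n = lprod (fun j => x - c j + 1) n * y := by
  have hstep : ∀ j : ℕ, y * (x - c j) = (x - c j + 1) * y := by
    intro j
    rw [mul_sub, hyx, hc j, add_mul (x - c j) 1 y, one_mul, add_mul x 1 y, one_mul,
      sub_mul x (c j) y]
    abel
  induction n with
  | zero => simp [lp_zero]
  | succ n ih =>
    rw [lp_succ, lp_succ, ← mul_assoc, ih, mul_assoc, hstep n, ← mul_assoc]

lemma pow_lp (x y : A) (hyx : y * x = (x - 1) * y) (a n : ℕ) :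
    y ^ a * lprod (fun j : ℕ => x - (j : A)) n
      = lprod (fun j : ℕ => x - (j : A) - (a : A)) n * y ^ a := by
  induction a with
  | zero => simp
  | succ a ih =>
    rw [pow_succ', mul_assoc, ih, ← mul_assoc]
    have e1 : lprod (fun j : ℕ => x - (j : A) - (a : A)) n
        = lprod (fun j : ℕ => x - ((j : A) + (a : A))) n :=
      lp_congr _ _ _ (fun j _ => sub_sub x _ _)
    have hc : ∀ j : ℕ, y * ((j : A) + (a : A)) = ((j : A) + (a : A)) * y := by
      intro j
      exact (((Nat.cast_commute j y).symm).add_right ((Nat.cast_commute a y).symm)).eq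
    rw [e1, lp_shift x y hyx (fun j => (j : A) + (a : A)) hc n]
    have e2 : lprod (fun j : ℕ => x - ((j : A) + (a : A)) - 1) n
        = lprod (fun j : ℕ => x - (j : A) - ((a + 1 : ℕ) : A)) n := by
      apply lp_congr
      intro j _
      push_cast
      abel
    rw [e2, mul_assoc, ← pow_succ']

end Aux
section Key

variable {A : Type*} [Ring A] [Algebra ℚ A]

lemma nat_cancel {m : ℕ} (hm : m ≠ 0) {X : A} (h : (m : A) * X = 0) : X = 0 := by
  have h1 : ((m : ℚ)) • X = 0 := by
    rw [Algebra.smul_def, map_natCast]; exact h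
  have h2 := congrArg (fun z => ((m : ℚ))⁻¹ • z) h1
  simpa [smul_smul, inv_mul_cancel₀ (show (m : ℚ) ≠ 0 from Nat.cast_ne_zero.mpr hm)]
    using h2

lemma key_e (x y : A) (d : ℕ) (hyx : y * x = (x - 1) * y)
    (hmin : lprod (fun j : ℕ => x - (j : A)) (d + 1) = 0) :
    ∀ a, a ≤ d + 1 → lprod (fun j : ℕ => x - ((a + j : ℕ) : A)) (d + 1 - a) * y ^ a = 0 := by
  intro a
  induction a with
  | zero =>
    intro _
    simpa using hmin
  | succ a ih =>
    intro ha
    have iha := ih (by omega)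
    have hn1 : d + 1 - a = (d - a) + 1 := by omega
    have hn2 : d + 1 - (a + 1) = d - a := by omega
    rw [hn1] at iha
    rw [hn2]
    set n := d - a with hdn
    set P := lprod (fun j : ℕ => x - ((a + 1 + j : ℕ) : A)) n with hP
    have peel1 : lprod (fun j : ℕ => x - ((a + j : ℕ) : A)) (n + 1) = (x - (a : A)) * P := by
      rw [lp_succ', Nat.add_zero, hP]
      congr 1
      apply lp_congr
      intro j _
      congr 2
      omega
    have shifted : y * lprod (fun j : ℕ => x - ((a + j : ℕ) : A)) (n + 1)
        = lprod (fun j : ℕ => x - ((a + 1 + j : ℕ) : A)) (n + 1) * y := by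
      rw [lp_shift x y hyx (fun j => ((a + j : ℕ) : A))
        (fun j => ((Nat.cast_commute (a + j) y).symm).eq) (n + 1)]
      congr 1
      apply lp_congr
      intro j _
      push_cast
      abel
    have peel2 : lprod (fun j : ℕ => x - ((a + 1 + j : ℕ) : A)) (n + 1)
        = P * (x - ((a + 1 + n : ℕ) : A)) := by
      rw [lp_succ, hP]
    have h1 : (x - (a : A)) * (P * y ^ (a + 1)) = 0 := by
      have h0 := congrArg (fun z => z * y) iha
      simp only [zero_mul] at h0
      rw [peel1, mul_assoc, mul_assoc, ← pow_succ] at h0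
      exact h0
    have h2 : (x - ((a + 1 + n : ℕ) : A)) * (P * y ^ (a + 1)) = 0 := by
      have h0 := congrArg (fun z => y * z) iha
      simp only [mul_zero] at h0
      rw [← mul_assoc, shifted, peel2, mul_assoc, mul_assoc, ← pow_succ'] at h0
      have hcomm : (x - ((a + 1 + n : ℕ) : A)) * P = P * (x - ((a + 1 + n : ℕ) : A)) := by
        rw [hP]
        exact lp_mul_comm _ _ _ (fun j _ => cast_sub_comm x (a + 1 + n) (a + 1 + j))
      rw [← mul_assoc, hcomm, mul_assoc]
      exact h0
    have h3 : ((n + 1 : ℕ) : A) * (P * y ^ (a + 1)) = 0 := by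
      have e4 : ((n + 1 : ℕ) : A) = (x - (a : A)) - (x - ((a + 1 + n : ℕ) : A)) := by
        push_cast
        abel
      rw [e4, sub_mul, h1, h2, sub_zero]
    exact nat_cancel (Nat.succ_ne_zero n) h3

lemma key_f (x y : A) (d : ℕ) (hyx : y * x = (x + 1) * y)
    (hmin : lprod (fun j : ℕ => x - (j : A)) (d + 1) = 0) :
    ∀ a, a ≤ d + 1 → lprod (fun j : ℕ => x - (j : A)) (d + 1 - a) * y ^ a = 0 := by
  intro a
  induction a with
  | zero =>
    intro _
    simpa using hmin
  | succ a ih =>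
    intro ha
    have iha := ih (by omega)
    have hn1 : d + 1 - a = (d - a) + 1 := by omega
    have hn2 : d + 1 - (a + 1) = d - a := by omega
    rw [hn1] at iha
    rw [hn2]
    set n := d - a with hdn
    set P := lprod (fun j : ℕ => x - ((j : ℕ) : A)) n with hP
    have h1 : (x - (n : A)) * (P * y ^ (a + 1)) = 0 := by
      have h0 := congrArg (fun z => z * y) iha
      simp only [zero_mul] at h0
      rw [lp_succ, mul_assoc, mul_assoc, ← pow_succ] at h0
      have hcomm : (x - (n : A)) * P = P * (x - (n : A)) := by
        rw [hP]
        exact lp_mul_comm _ _ _ (fun j _ => cast_sub_comm x n j)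
      rw [← mul_assoc, hcomm, mul_assoc]
      exact h0
    have h2 : (x + 1) * (P * y ^ (a + 1)) = 0 := by
      have h0 := congrArg (fun z => y * z) iha
      simp only [mul_zero] at h0
      rw [← mul_assoc,
        lp_shift' x y hyx (fun j => ((j : ℕ) : A))
          (fun j => ((Nat.cast_commute j y).symm).eq) (n + 1)] at h0
      have peelf : lprod (fun j : ℕ => x - ((j : ℕ) : A) + 1) (n + 1) = (x + 1) * P := by
        rw [lp_succ', hP]
        have e5 : x - ((0 : ℕ) : A) + 1 = x + 1 := by norm_num
        rw [e5]
        congr 1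
        apply lp_congr
        intro j _
        push_cast
        abel
      rw [peelf, mul_assoc, mul_assoc, ← pow_succ'] at h0
      exact h0
    have h3 : ((n + 1 : ℕ) : A) * (P * y ^ (a + 1)) = 0 := by
      have e4 : ((n + 1 : ℕ) : A) = (x + 1) - (x - (n : A)) := by
        push_cast
        abel
      rw [e4, sub_mul, h1, h2, sub_zero]
    exact nat_cancel (Nat.succ_ne_zero n) h3

end Key
/-- In `B_d`, for `a + b = d + 1`: `f^a·binom(H2,b) = 0 = binom(H2,b)·e^a` and
`e^a·binom(H1,b) = 0 = binom(H1,b)·f^a`; in particular `e^{d+1} = 0 = f^{d+1}`. -/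
theorem Bd_truncation (d : ℕ) (A : Type*) [Ring A] [Algebra ℚ A]
    (e f H1 H2 : A)
    (h12 : H1 * H2 = H2 * H1)
    (h1e : H1 * e - e * H1 = e) (h1f : H1 * f - f * H1 = -f)
    (h2e : H2 * e - e * H2 = -e) (h2f : H2 * f - f * H2 = f)
    (hef : e * f - f * e = H1 - H2)
    (hsum : H1 + H2 = (d : A))
    (hmin : ((List.range (d + 1)).map (fun i : ℕ => H1 - (i : A))).prod = 0)
    (a b : ℕ) (hab : a + b = d + 1) :
    f ^ a * abinom H2 b = 0 ∧ abinom H2 b * e ^ a = 0 ∧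
    e ^ a * abinom H1 b = 0 ∧ abinom H1 b * f ^ a = 0 ∧
    e ^ (d + 1) = 0 ∧ f ^ (d + 1) = 0 := by
  have ha : a ≤ d + 1 := by omega
  have hb : d + 1 - a = b := by omega
  have he1 : e * H1 = (H1 - 1) * e := by
    have h := h1e
    rw [sub_eq_iff_eq_add] at h
    rw [sub_one_mul, h, add_sub_cancel_left]
  have hf1 : f * H1 = (H1 + 1) * f := by
    have h := h1f
    rw [sub_eq_iff_eq_add] at h
    rw [add_one_mul, h]
    abel
  have hf2 : f * H2 = (H2 - 1) * f := by
    have h := h2f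
    rw [sub_eq_iff_eq_add] at h
    rw [sub_one_mul, h, add_sub_cancel_left]
  have hmin' : lprod (fun j : ℕ => H1 - (j : A)) (d + 1) = 0 := hmin
  have k1 := key_e H1 e d he1 hmin'
  have k2 := key_f H1 f d hf1 hmin'
  have hH2 : H2 = (d : A) - H1 := by
    rw [← hsum]
    abel
  have hab1 : abinom H1 b = ((b.factorial : ℚ))⁻¹ • lprod (fun j : ℕ => H1 - (j : A)) b := rfl
  have hab2 : abinom H2 b = ((b.factorial : ℚ))⁻¹ • lprod (fun j : ℕ => H2 - (j : A)) b := rfl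
  have k1b : lprod (fun j : ℕ => H1 - ((a + j : ℕ) : A)) b * e ^ a = 0 := by
    rw [← hb]; exact k1 a ha
  have k2b : lprod (fun j : ℕ => H1 - (j : A)) b * f ^ a = 0 := by
    rw [← hb]; exact k2 a ha
  have hfactH : ∀ i j : ℕ, (fun j : ℕ => H1 - ((d - j : ℕ) : A)) i *
      (fun j : ℕ => H1 - ((d - j : ℕ) : A)) j = (fun j : ℕ => H1 - ((d - j : ℕ) : A)) j *
      (fun j : ℕ => H1 - ((d - j : ℕ) : A)) i := fun i j => cast_sub_comm H1 (d - i) (d - j)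
  refine ⟨?_, ?_, ?_, ?_, ?_, ?_⟩
  · -- f^a * abinom H2 b = 0
    rw [hab2, mul_smul_comm]
    have h := pow_lp H2 f hf2 a b
    have c1 : lprod (fun j : ℕ => H2 - (j : A) - (a : A)) b
        = lprod (fun j : ℕ => -(H1 - ((d - a - j : ℕ) : A))) b := by
      apply lp_congr
      intro j hj
      rw [hH2, show d - a - j = d - (a + j) by omega,
        Nat.cast_sub (by omega : a + j ≤ d), Nat.cast_add]
      abel
    have c3 : lprod (fun j : ℕ => H1 - ((d - a - j : ℕ) : A)) b
        = lprod (fun j : ℕ => H1 - (j : A)) b := by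
      rw [← lp_rev (fun j : ℕ => H1 - ((d - a - j : ℕ) : A)) b
        (fun i j => cast_sub_comm H1 (d - a - i) (d - a - j))]
      apply lp_congr
      intro j hj
      congr 2
      omega
    rw [h, c1, lp_neg, c3, mul_assoc, k2b, mul_zero, smul_zero]
  · -- abinom H2 b * e^a = 0
    rw [hab2, smul_mul_assoc]
    have c1 : lprod (fun j : ℕ => H2 - (j : A)) b
        = lprod (fun j : ℕ => -(H1 - ((d - j : ℕ) : A))) b := by
      apply lp_congr
      intro j hj
      rw [hH2, Nat.cast_sub (by omega : j ≤ d)]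
      abel
    have c3 : lprod (fun j : ℕ => H1 - ((d - j : ℕ) : A)) b
        = lprod (fun j : ℕ => H1 - ((a + j : ℕ) : A)) b := by
      rw [← lp_rev (fun j : ℕ => H1 - ((d - j : ℕ) : A)) b
        (fun i j => cast_sub_comm H1 (d - i) (d - j))]
      apply lp_congr
      intro j hj
      congr 2
      omega
    rw [c1, lp_neg, c3, mul_assoc, k1b, mul_zero, smul_zero]
  · -- e^a * abinom H1 b = 0
    rw [hab1, mul_smul_comm]
    have h := pow_lp H1 e he1 a b
    have c1 : lprod (fun j : ℕ => H1 - (j : A) - (a : A)) b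
        = lprod (fun j : ℕ => H1 - ((a + j : ℕ) : A)) b := by
      apply lp_congr
      intro j _
      push_cast
      abel
    rw [h, c1, k1b, smul_zero]
  · -- abinom H1 b * f^a = 0
    rw [hab1, smul_mul_assoc, k2b, smul_zero]
  · -- e^(d+1) = 0
    have h := k1 (d + 1) le_rfl
    rw [Nat.sub_self] at h
    rw [← one_mul (e ^ (d + 1))]
    exact h
  · -- f^(d+1) = 0
    have h := k2 (d + 1) le_rfl
    rw [Nat.sub_self] at h
    rw [← one_mul (f ^ (d + 1))]
    exact h
end

section
/- In the algebra B_d, for all nonnegative integers a, b, c with a+b+c = d+1, one has f^(a)·binom(H2,b)·e^(c) = Σ_{k=1}^{min(a,c)} (-1)^{k-1} binom(b+k,k) f^(a-k)·binom(H2,b+k)·e^(c-k), where x^(m)=x^m/m! denotes divided powers. -/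
/-- The divided power `x^(m) = x^m / m!` in a `ℚ`-algebra. -/
noncomputable def dpow {A : Type*} [Ring A] [Algebra ℚ A] (x : A) (m : ℕ) : A :=
  ((m.factorial : ℚ)⁻¹) • x ^ m

/-!
Write `H = H₂`, so that `H₁ = d - H` and the relations read `e H = (H + 1) e`, `H f = f (H + 1)`,
`e f - f e = d - 2H` and `[H]_(d+1) = 0`, where `[x]_p = x (x - 1) ⋯ (x - p + 1)` and
`[d - x]_(d+1) = (-1)^(d+1) [x]_(d+1)`. After multiplying
by `a! b! c!` the claim says that

  `S(a, b, c) = Σ_k (-1)^k k! C(a,k) C(c,k) f^(a-k) [H]_(b+k) e^(c-k)`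

vanishes whenever `a + b + c = d + 1`. For `a = 0` or `c = 0` this is `[H]_b e^c = 0` or `f^a [H]_b = 0`,
obtained from `[H]_(d+1) = 0` by induction using `[x + 1]_(p+1) - [x]_(p+1) = (p + 1) [x]_p`. Otherwise,
moving `f` through the ordered monomials `f^i q(H) e^j` gives

  `(b + 1) S(a+1, b, c+1) = S(a, b+1, c+1) f - f S(a, b+1, c+1) + 2 (c + 1) S(a, b+2, c)`,

an identity that reduces to one between the polynomial coefficients of the monomials, and induction
on `a` concludes.
-/

open Polynomial Finset
open scoped Nat

section Pochhammer

variable (R : Type*) [CommRing R]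

theorem descPochhammer_succ_comp_X_add_one (n : ℕ) :
    (descPochhammer R (n + 1)).comp (X + 1) = (X + 1) * descPochhammer R n := by
  rw [descPochhammer_succ_left, mul_comp, X_comp, comp_assoc, sub_comp, X_comp, one_comp,
    add_sub_cancel_right, comp_X]

theorem descPochhammer_succ_comp_X_add_one_sub (n : ℕ) :
    (descPochhammer R (n + 1)).comp (X + 1) - descPochhammer R (n + 1) =
      ((n : R) + 1) • descPochhammer R n := by
  rw [descPochhammer_succ_comp_X_add_one, descPochhammer_succ_right, smul_eq_C_mul]
  simp only [map_add, map_natCast, map_one]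
  ring

theorem descPochhammer_succ_comp_natCast_sub_X (n : ℕ) :
    (descPochhammer R (n + 1)).comp ((n : R[X]) - X) =
      (-1) ^ (n + 1) * descPochhammer R (n + 1) := by
  rw [comp, ← eval_map, descPochhammer_map C, descPochhammer_eval_eq_ascPochhammer,
    show (n : R[X]) - X - ((n + 1 : ℕ) : R[X]) + 1 = -X by push_cast; ring,
    ascPochhammer_eval_neg_eq_descPochhammer, ← descPochhammer_map C, eval_map, ← comp, comp_X]

end Pochhammer

theorem SemiconjBy.aeval {R A : Type*} [CommSemiring R] [Semiring A] [Algebra R A] {a x y : A}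
    (h : SemiconjBy a x y) (p : R[X]) : SemiconjBy a (aeval x p) (aeval y p) := by
  induction p using Polynomial.induction_on' with
  | add p q hp hq => simpa only [map_add] using hp.add_right hq
  | monomial n r =>
    simpa only [aeval_monomial] using
      SemiconjBy.mul_right (Algebra.commute_algebraMap_right r a) (h.pow_right n)

section Aeval

variable {R A : Type*} [CommRing R] [Ring A] [Algebra R A]

theorem aeval_descPochhammer_eq_prod (x : A) (n : ℕ) :
    aeval x (descPochhammer R n) = ((List.range n).map fun i : ℕ => x - (i : A)).prod := by
  induction n with
  | zero => simp
  | succ n ih => simp [descPochhammer_succ_right, List.range_succ, ih]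

theorem aeval_natCast_sub_descPochhammer (x : A) (n : ℕ) :
    aeval ((n : A) - x) (descPochhammer R (n + 1)) =
      (-1) ^ (n + 1) * aeval x (descPochhammer R (n + 1)) := by
  rw [show (n : A) - x = aeval x ((n : R[X]) - X) by simp, ← aeval_comp,
    descPochhammer_succ_comp_natCast_sub_X, map_mul]
  simp

end Aeval

namespace BdReduction

variable {A : Type*} [Ring A] [Algebra ℚ A]

/-- The relations of `B_d` written in terms of `H = H₂` alone (`H₁ = d - H`), apart from
`[H₁]_(d+1) = 0`. -/
structure GL2Relations (d : ℕ) (e f H : A) : Prop where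
  e_mul_H : e * H = (H + 1) * e
  H_mul_f : H * f = f * (H + 1)
  e_mul_f : e * f = f * e + ((d : A) - 2 * H)

variable {d : ℕ} {e f H : A}

theorem e_mul_aeval (he : e * H = (H + 1) * e) (q : ℚ[X]) :
    e * aeval H q = aeval H (q.comp (X + 1)) * e := by
  simpa [aeval_comp] using (SemiconjBy.aeval he q).eq

theorem aeval_mul_f (hf : H * f = f * (H + 1)) (q : ℚ[X]) :
    aeval H q * f = f * aeval H (q.comp (X + 1)) := by
  simpa [aeval_comp] using (SemiconjBy.aeval hf.symm q).eq.symm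

namespace GL2Relations

theorem pow_succ_mul_f (h : GL2Relations d e f H) (j : ℕ) :
    e ^ (j + 1) * f =
      f * e ^ (j + 1) +
        aeval H (((j : ℚ[X]) + 1) * ((d : ℚ[X]) - (j : ℚ[X]) - 2 * X)) * e ^ j := by
  have hdH : (d : A) - 2 * H = aeval H ((d : ℚ[X]) - 2 * X) := by
    rw [map_sub, map_mul, map_natCast, aeval_X, map_ofNat]
  induction j with
  | zero => simp [h.e_mul_f, hdH]
  | succ j ih =>
    rw [pow_succ', mul_assoc, ih, mul_add, ← mul_assoc, h.e_mul_f, ← mul_assoc,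
      e_mul_aeval h.e_mul_H, mul_assoc _ e, ← pow_succ', add_mul, mul_assoc, ← pow_succ', hdH,
      add_assoc, ← add_mul, ← map_add]
    congr 3
    simp only [sub_comp, mul_comp, add_comp, natCast_comp, X_comp, ofNat_comp, one_comp]
    push_cast
    ring

theorem pow_mul_f (h : GL2Relations d e f H) (j : ℕ) :
    e ^ j * f =
      f * e ^ j +
        aeval H ((j : ℚ[X]) * ((d : ℚ[X]) + 1 - (j : ℚ[X]) - 2 * X)) * e ^ (j - 1) := by
  cases j with
  | zero => simp
  | succ j =>
    rw [h.pow_succ_mul_f, Nat.add_sub_cancel]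
    congr 3
    push_cast
    ring

theorem commutator_term (h : GL2Relations d e f H) (i j : ℕ) (q : ℚ[X]) :
    f ^ i * aeval H q * e ^ j * f - f * (f ^ i * aeval H q * e ^ j) =
      f ^ (i + 1) * aeval H (q.comp (X + 1) - q) * e ^ j +
        f ^ i * aeval H (q * ((j : ℚ[X]) * ((d : ℚ[X]) + 1 - (j : ℚ[X]) - 2 * X))) *
          e ^ (j - 1) := by
  rw [mul_assoc _ (e ^ j), h.pow_mul_f, mul_add, ← mul_assoc, mul_assoc (f ^ i),
    aeval_mul_f h.H_mul_f, ← mul_assoc, ← pow_succ, ← mul_assoc f, ← mul_assoc f, ← pow_succ',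
    map_sub, map_mul (aeval H) q]
  noncomm_ring

end GL2Relations

noncomputable def pbwSum (e f H : A) (a c : ℕ) : (ℕ → ℚ[X]) →ₗ[ℚ] A where
  toFun q := ∑ k ∈ range (c + 1), f ^ (a - k) * aeval H (q k) * e ^ (c - k)
  map_add' q r := by simp only [Pi.add_apply, map_add, mul_add, add_mul, sum_add_distrib]
  map_smul' t q := by
    simp only [Pi.smul_apply, map_smul, mul_smul_comm, smul_mul_assoc, smul_sum, RingHom.id_apply]

theorem pbwSum_apply (a c : ℕ) (q : ℕ → ℚ[X]) :
    pbwSum e f H a c q = ∑ k ∈ range (c + 1), f ^ (a - k) * aeval H (q k) * e ^ (c - k) := rfl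

theorem pbwSum_congr {a c : ℕ} {q r : ℕ → ℚ[X]} (hqr : ∀ k ≤ c, q k = r k) :
    pbwSum e f H a c q = pbwSum e f H a c r := by
  simp only [pbwSum_apply]
  exact sum_congr rfl fun k hk => by rw [hqr k (Nat.lt_succ_iff.mp (mem_range.mp hk))]

theorem pbwSum_zero_right (a : ℕ) (q : ℕ → ℚ[X]) :
    pbwSum e f H a 0 q = f ^ a * aeval H (q 0) := by
  simp [pbwSum_apply]

theorem pbwSum_zero_left (c : ℕ) {q : ℕ → ℚ[X]} (hq : ∀ k, 0 < k → q k = 0) :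
    pbwSum e f H 0 c q = aeval H (q 0) * e ^ c := by
  rw [pbwSum_apply, sum_range_succ', sum_eq_zero fun k _ => by simp [hq (k + 1) k.succ_pos]]
  simp

theorem pbwSum_succ_succ (a c : ℕ) {q : ℕ → ℚ[X]} (hq : q 0 = 0) :
    pbwSum e f H (a + 1) (c + 1) q = pbwSum e f H a c (fun k => q (k + 1)) := by
  simp [pbwSum_apply, sum_range_succ' _ (c + 1), hq]

theorem GL2Relations.pbwSum_mul_f_sub (h : GL2Relations d e f H) {a : ℕ} {q : ℕ → ℚ[X]}
    (hq : ∀ k, a < k → q k = 0) (c : ℕ) :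
    pbwSum e f H a (c + 1) q * f - f * pbwSum e f H a (c + 1) q =
      pbwSum e f H (a + 1) (c + 1) (fun k => (q k).comp (X + 1) - q k) +
        pbwSum e f H a c (fun k => q k * (((c + 1 - k : ℕ) : ℚ[X]) *
          ((d : ℚ[X]) + 1 - ((c + 1 - k : ℕ) : ℚ[X]) - 2 * X))) := by
  simp only [pbwSum_apply, sum_mul, mul_sum, ← sum_sub_distrib, h.commutator_term,
    sum_add_distrib]
  congr 1
  · refine sum_congr rfl fun k _ => ?_
    rcases le_or_gt k a with hka | hak
    · rw [Nat.sub_add_comm hka]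
    · simp [hq k hak]
  · rw [sum_range_succ, Nat.sub_self, Nat.cast_zero, zero_mul, mul_zero, map_zero, mul_zero,
      zero_mul, add_zero]
    exact sum_congr rfl fun k _ => by rw [show c + 1 - k - 1 = c - k by omega]

/-- `S(a, b, c)` of the header is `pbwSum e f H a c (relCoeff a b c)`. -/
noncomputable def relCoeff (a b c k : ℕ) : ℚ[X] :=
  ((-1) ^ k * k ! * a.choose k * c.choose k : ℚ) • descPochhammer ℚ (b + k)

@[simp] theorem relCoeff_zero (a b c : ℕ) : relCoeff a b c 0 = descPochhammer ℚ b := by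
  simp [relCoeff]

theorem relCoeff_of_lt {a k : ℕ} (b c : ℕ) (hak : a < k) : relCoeff a b c k = 0 := by
  simp [relCoeff, Nat.choose_eq_zero_of_lt hak]

theorem relCoeff_recursion (a b c : ℕ) {j : ℕ} (hj : j ≤ c) :
    ((b : ℚ) + 1) • relCoeff (a + 1) b (c + 1) (j + 1) -
        ((relCoeff a (b + 1) (c + 1) (j + 1)).comp (X + 1) - relCoeff a (b + 1) (c + 1) (j + 1)) =
      relCoeff a (b + 1) (c + 1) j * (((c + 1 - j : ℕ) : ℚ[X]) *
          (((a + b + c + 1 : ℕ) : ℚ[X]) + 1 - ((c + 1 - j : ℕ) : ℚ[X]) - 2 * X)) +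
        (2 * ((c : ℚ) + 1)) • relCoeff a (b + 2) c j := by
  have hpascal : ((a + 1).choose (j + 1) : ℚ[X]) = a.choose j + a.choose (j + 1) := by
    exact_mod_cast Nat.choose_succ_succ' a j
  have ha : ((a + 1 : ℕ) : ℚ[X]) * a.choose j = (a + 1).choose (j + 1) * ((j + 1 : ℕ) : ℚ[X]) := by
    exact_mod_cast Nat.add_one_mul_choose_eq a j
  have hc : (c.choose j : ℚ[X]) * ((c + 1 : ℕ) : ℚ[X]) =
      (c + 1).choose j * ((c + 1 - j : ℕ) : ℚ[X]) := by
    exact_mod_cast Nat.choose_mul_succ_eq c j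
  have hc' : ((c + 1).choose (j + 1) : ℚ[X]) * ((j + 1 : ℕ) : ℚ[X]) =
      (c + 1).choose j * ((c + 1 - j : ℕ) : ℚ[X]) := by
    exact_mod_cast Nat.choose_succ_right_eq (c + 1) j
  simp only [relCoeff, smul_comp, ← smul_sub]
  rw [show b + 1 + (j + 1) = b + j + 1 + 1 by omega, descPochhammer_succ_comp_X_add_one_sub,
    show b + (j + 1) = b + j + 1 by omega, show b + 1 + j = b + j + 1 by omega,
    show b + 2 + j = b + j + 1 + 1 by omega, descPochhammer_succ_right ℚ (b + j + 1)]
  simp only [smul_eq_C_mul, map_mul, map_pow, map_neg, map_one, map_natCast, map_add, map_ofNat]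
  rw [Nat.cast_sub (show j ≤ c + 1 by omega)] at hc hc' ⊢
  push_cast [Nat.factorial_succ] at ha hc hc' ⊢
  -- Both sides are `[X]_(b+j+1)` times a polynomial of degree one; its `X`-coefficient agrees by
  -- `hc`, its constant term by `hpascal`, `ha` and `hc'`.
  linear_combination (-1) ^ j * (j ! : ℚ[X]) * descPochhammer ℚ (b + j + 1) *
    ((-((j : ℚ[X]) + 1) * ((b : ℚ[X]) + 1) * (c + 1).choose (j + 1) -
          ((j : ℚ[X]) + 1) ^ 2 * (c + 1).choose (j + 1)) * hpascal +
      a.choose j * (2 * b + 2 * j + 2 - 2 * X) * hc + a.choose j * (a - b - j - 1) * hc' -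
      ((j : ℚ[X]) + 1) * (c + 1).choose (j + 1) * ha)

theorem GL2Relations.smul_pbwSum_relCoeff (h : GL2Relations d e f H) {a b c : ℕ}
    (habc : a + b + c + 1 = d) :
    ((b : ℚ) + 1) • pbwSum e f H (a + 1) (c + 1) (relCoeff (a + 1) b (c + 1)) =
      (pbwSum e f H a (c + 1) (relCoeff a (b + 1) (c + 1)) * f -
          f * pbwSum e f H a (c + 1) (relCoeff a (b + 1) (c + 1))) +
        (2 * ((c : ℚ) + 1)) • pbwSum e f H a c (relCoeff a (b + 2) c) := by
  subst habc
  rw [h.pbwSum_mul_f_sub (fun k => relCoeff_of_lt _ _) c, add_assoc, ← sub_eq_iff_eq_add',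
    ← map_smul, ← map_smul, ← map_sub, ← map_add, pbwSum_succ_succ]
  · exact pbwSum_congr fun j hj => by
      simpa only [Pi.sub_apply, Pi.smul_apply, Pi.add_apply] using relCoeff_recursion a b c hj
  · simp only [Pi.sub_apply, Pi.smul_apply, relCoeff_zero]
    rw [descPochhammer_succ_comp_X_add_one_sub, sub_self]

theorem aeval_descPochhammer_mul_pow_eq_zero (he : e * H = (H + 1) * e)
    (hH : aeval H (descPochhammer ℚ (d + 1)) = 0) {b c : ℕ} (hbc : b + c = d + 1) :
    aeval H (descPochhammer ℚ b) * e ^ c = 0 := by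
  induction c generalizing b with
  | zero => simpa [← hbc] using hH
  | succ c ih =>
    have h0 := ih (b := b + 1) (by omega)
    have hright : aeval H (descPochhammer ℚ (b + 1)) * e ^ (c + 1) = 0 := by
      rw [pow_succ, ← mul_assoc, h0, zero_mul]
    have hleft : aeval H ((descPochhammer ℚ (b + 1)).comp (X + 1)) * e ^ (c + 1) = 0 := by
      rw [pow_succ', ← mul_assoc, ← e_mul_aeval he, mul_assoc, h0, mul_zero]
    have hsmul : ((b : ℚ) + 1) • (aeval H (descPochhammer ℚ b) * e ^ (c + 1)) = 0 := by
      rw [← smul_mul_assoc, ← map_smul, ← descPochhammer_succ_comp_X_add_one_sub, map_sub,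
        sub_mul, hleft, hright, sub_zero]
    exact (smul_eq_zero.mp hsmul).resolve_left (by positivity)

theorem pow_mul_aeval_descPochhammer_eq_zero (hf : H * f = f * (H + 1))
    (hH : aeval H (descPochhammer ℚ (d + 1)) = 0) {a b : ℕ} (hab : a + b = d + 1) :
    f ^ a * aeval H (descPochhammer ℚ b) = 0 := by
  induction a generalizing b with
  | zero => simpa [← hab] using hH
  | succ a ih =>
    have h0 := ih (b := b + 1) (by omega)
    have hleft : f ^ (a + 1) * aeval H (descPochhammer ℚ (b + 1)) = 0 := by
      rw [pow_succ', mul_assoc, h0, mul_zero]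
    have hright : f ^ (a + 1) * aeval H ((descPochhammer ℚ (b + 1)).comp (X + 1)) = 0 := by
      rw [pow_succ, mul_assoc, ← aeval_mul_f hf, ← mul_assoc, h0, zero_mul]
    have hsmul : ((b : ℚ) + 1) • (f ^ (a + 1) * aeval H (descPochhammer ℚ b)) = 0 := by
      rw [← mul_smul_comm, ← map_smul, ← descPochhammer_succ_comp_X_add_one_sub, map_sub,
        mul_sub, hleft, hright, sub_zero]
    exact (smul_eq_zero.mp hsmul).resolve_left (by positivity)

theorem GL2Relations.pbwSum_relCoeff_eq_zero (h : GL2Relations d e f H)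
    (hH : aeval H (descPochhammer ℚ (d + 1)) = 0) {a b c : ℕ} (habc : a + b + c = d + 1) :
    pbwSum e f H a c (relCoeff a b c) = 0 := by
  induction a generalizing b c with
  | zero =>
    rw [pbwSum_zero_left c (fun k hk => relCoeff_of_lt b c hk), relCoeff_zero]
    exact aeval_descPochhammer_mul_pow_eq_zero h.e_mul_H hH (by omega)
  | succ a ih =>
    cases c with
    | zero =>
      rw [pbwSum_zero_right, relCoeff_zero]
      exact pow_mul_aeval_descPochhammer_eq_zero h.H_mul_f hH (by omega)
    | succ c =>
      have hkey := h.smul_pbwSum_relCoeff (a := a) (b := b) (c := c) (by omega)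
      rw [ih (by omega), ih (by omega), zero_mul, mul_zero, sub_zero, smul_zero, add_zero] at hkey
      exact (smul_eq_zero.mp hkey).resolve_left (by positivity)

theorem dpow_mul_abinom_mul_dpow (x y z : A) (i p j : ℕ) :
    dpow x i * abinom y p * dpow z j =
      ((i ! * p ! * j ! : ℚ)⁻¹) • (x ^ i * aeval y (descPochhammer ℚ p) * z ^ j) := by
  rw [aeval_descPochhammer_eq_prod]
  simp only [dpow, abinom, smul_mul_assoc, mul_smul_comm, smul_smul, mul_inv]
  congr 1
  ring

theorem relCoeff_scalar_div_factorials {a b c k : ℕ} (hka : k ≤ a) (hkc : k ≤ c) :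
    (a ! * b ! * c ! : ℚ)⁻¹ * ((-1) ^ k * k ! * a.choose k * c.choose k) =
      (-1) ^ k * (b + k).choose k * ((a - k)! * (b + k)! * (c - k)! : ℚ)⁻¹ := by
  rw [Nat.cast_choose ℚ hka, Nat.cast_choose ℚ hkc, Nat.cast_choose ℚ (Nat.le_add_left k b),
    Nat.add_sub_cancel]
  field_simp

theorem GL2Relations.sum_dpow_abinom_dpow_eq_zero (h : GL2Relations d e f H)
    (hH : aeval H (descPochhammer ℚ (d + 1)) = 0) {a b c : ℕ} (habc : a + b + c = d + 1) :
    ∑ k ∈ range (min a c + 1), ((-1 : ℚ) ^ k * (b + k).choose k) •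
      (dpow f (a - k) * abinom H (b + k) * dpow e (c - k)) = 0 := by
  have hzero := congrArg ((a ! * b ! * c ! : ℚ)⁻¹ • ·) (h.pbwSum_relCoeff_eq_zero hH habc)
  simp only [smul_zero, pbwSum_apply, smul_sum] at hzero
  rw [← sum_subset (range_subset_range.mpr (by omega : min a c + 1 ≤ c + 1))] at hzero
  · rw [← hzero]
    refine sum_congr rfl fun k hk => ?_
    have hk' := mem_range.mp hk
    rw [dpow_mul_abinom_mul_dpow, relCoeff, map_smul, mul_smul_comm, smul_mul_assoc, smul_smul,
      smul_smul, relCoeff_scalar_div_factorials (by omega) (by omega)]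
  · intro k hk hk'
    simp only [mem_range] at hk hk'
    rw [relCoeff_of_lt b c (by omega), map_zero, mul_zero, zero_mul, smul_zero]

end BdReduction

open BdReduction

theorem Bd_reduction_base_general (d : ℕ) (A : Type*) [Ring A] [Algebra ℚ A]
    (e f H1 H2 : A)
    (h2e : H2 * e - e * H2 = -e) (h2f : H2 * f - f * H2 = f)
    (hef : e * f - f * e = H1 - H2)
    (hsum : H1 + H2 = (d : A))
    (hmin : ((List.range (d + 1)).map (fun i : ℕ => H1 - (i : A))).prod = 0)
    (a b c : ℕ) (habc : a + b + c = d + 1) :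
    dpow f a * abinom H2 b * dpow e c =
      ∑ k ∈ Finset.Icc 1 (min a c),
        ((-1 : ℚ) ^ (k - 1) * ((b + k).choose k : ℚ)) •
          (dpow f (a - k) * abinom H2 (b + k) * dpow e (c - k)) := by
  have hH1 : H1 = (d : A) - H2 := eq_sub_of_add_eq hsum
  have hrel : GL2Relations d e f H2 :=
    { e_mul_H := by linear_combination (norm := noncomm_ring) -h2e
      H_mul_f := by linear_combination (norm := noncomm_ring) h2f
      e_mul_f := by rw [hH1] at hef; linear_combination (norm := noncomm_ring) hef }
  have hvan : aeval H2 (descPochhammer ℚ (d + 1)) = 0 := by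
    rwa [← aeval_descPochhammer_eq_prod (R := ℚ), hH1, aeval_natCast_sub_descPochhammer,
      (isUnit_neg_one.pow _).mul_right_eq_zero] at hmin
  have hzero := hrel.sum_dpow_abinom_dpow_eq_zero hvan habc
  rw [range_eq_Ico, sum_eq_sum_Ico_succ_bot (Nat.succ_pos _), zero_add,
    Nat.succ_eq_add_one, Ico_add_one_right_eq_Icc] at hzero
  simp only [pow_zero, add_zero, Nat.choose_zero_right, Nat.cast_one, mul_one, one_smul,
    Nat.sub_zero] at hzero
  rw [eq_neg_of_add_eq_zero_left hzero, ← sum_neg_distrib]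
  refine sum_congr rfl fun k hk => ?_
  obtain ⟨j, rfl⟩ : ∃ j, k = j + 1 := ⟨k - 1, by grind⟩
  rw [← neg_smul, Nat.add_sub_cancel, pow_succ]
  congr 1
  ring

/-- In `B_d`, for `a + b + c = d + 1`:
`f^(a)·binom(H2,b)·e^(c) = Σ_{k=1}^{min(a,c)} (-1)^{k-1} binom(b+k,k)
f^(a-k)·binom(H2,b+k)·e^(c-k)`. -/
theorem Bd_reduction_base (d : ℕ) (A : Type*) [Ring A] [Algebra ℚ A]
    (e f H1 H2 : A)
    (h12 : H1 * H2 = H2 * H1)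
    (h1e : H1 * e - e * H1 = e) (h1f : H1 * f - f * H1 = -f)
    (h2e : H2 * e - e * H2 = -e) (h2f : H2 * f - f * H2 = f)
    (hef : e * f - f * e = H1 - H2)
    (hsum : H1 + H2 = (d : A))
    (hmin : ((List.range (d + 1)).map (fun i : ℕ => H1 - (i : A))).prod = 0)
    (a b c : ℕ) (habc : a + b + c = d + 1) :
    dpow f a * abinom H2 b * dpow e c =
      ∑ k ∈ Finset.Icc 1 (min a c),
        ((-1 : ℚ) ^ (k - 1) * ((b + k).choose k : ℚ)) •
          (dpow f (a - k) * abinom H2 (b + k) * dpow e (c - k)) :=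
  Bd_reduction_base_general d A e f H1 H2 h2e h2f hef hsum hmin a b c habc
end

section
/- In the algebra B_d, for all nonnegative integers a, b, c with s := a+b+c-d ≥ 1, one has f^(a)·binom(H2,b)·e^(c) = Σ_{k=s}^{min(a,c)} (-1)^{k-s} binom(k-1,s-1) binom(b+k,k) f^(a-k)·binom(H2,b+k)·e^(c-k). -/
namespace BdAux

/-- Window product `(x-m)(x-(m+1))⋯(x-(m+l-1))`. -/
noncomputable def Wl {A : Type*} [Ring A] (x : A) (m l : ℕ) : A :=
  ((List.range l).map (fun j : ℕ => x - ((m + j : ℕ) : A))).prod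

section Ring
variable {A : Type*} [Ring A] [Algebra ℚ A]

lemma dpow_zero (x : A) : dpow x 0 = 1 := by simp [dpow]

lemma dpow_one (x : A) : dpow x 1 = x := by simp [dpow]

lemma dpow_eq (x : A) (n : ℕ) : dpow x n = ((n.factorial : ℚ)⁻¹) • x ^ n := rfl

lemma dpow_mul_self (x : A) (n : ℕ) :
    dpow x n * x = ((n : ℚ) + 1) • dpow x (n + 1) := by
  rw [dpow_eq, dpow_eq, smul_mul_assoc, ← pow_succ, smul_smul]
  congr 1
  rw [Nat.factorial_succ]
  push_cast
  rw [mul_inv]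
  field_simp

lemma self_mul_dpow (x : A) (n : ℕ) :
    x * dpow x n = ((n : ℚ) + 1) • dpow x (n + 1) := by
  rw [dpow_eq, dpow_eq, mul_smul_comm, ← pow_succ', smul_smul]
  congr 1
  rw [Nat.factorial_succ]
  push_cast
  rw [mul_inv]
  field_simp

lemma Wl_zero (x : A) (m : ℕ) : Wl x m 0 = 1 := by simp [Wl]

lemma Wl_succ (x : A) (m l : ℕ) :
    Wl x m (l + 1) = Wl x m l * (x - ((m + l : ℕ) : A)) := by
  rw [Wl, Wl, List.range_succ, List.map_append, List.prod_append]
  simp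

lemma Wl_succ' (x : A) (m l : ℕ) :
    Wl x m (l + 1) = (x - (m : A)) * Wl x (m + 1) l := by
  rw [Wl, Wl, show l + 1 = 1 + l by omega, List.range_add, List.map_append,
    List.prod_append, List.map_map]
  have h1 : List.range 1 = [0] := rfl
  rw [h1]
  simp only [List.map_cons, List.map_nil, List.prod_cons, List.prod_nil,
    Nat.add_zero, mul_one]
  have hfun : ((fun j : ℕ => x - ((m + j : ℕ) : A)) ∘ fun k => 1 + k) =
      (fun j : ℕ => x - ((m + 1 + j : ℕ) : A)) := by
    funext j; simp only [Function.comp_apply]; congr 2; omega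
  rw [hfun]

lemma Wl_split (x : A) (m l₁ l₂ : ℕ) :
    Wl x m (l₁ + l₂) = Wl x m l₁ * Wl x (m + l₁) l₂ := by
  rw [Wl, Wl, Wl, List.range_add, List.map_append, List.prod_append, List.map_map]
  have hfun : ((fun j : ℕ => x - ((m + j : ℕ) : A)) ∘ fun k => l₁ + k) =
      (fun j : ℕ => x - ((m + l₁ + j : ℕ) : A)) := by
    funext j; simp only [Function.comp_apply]; congr 2; omega
  rw [hfun]

lemma commute_sub_cast (x : A) (i j : ℕ) :
    Commute (x - (i : A)) (x - (j : A)) := by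
  have h1 : Commute x (x - (j:A)) := (Commute.refl x).sub_right (Nat.commute_cast x j)
  have h2 : Commute ((i:A)) (x - (j:A)) :=
    (Nat.cast_commute i x).sub_right (Nat.commute_cast _ j)
  exact h1.sub_left h2

lemma commute_sub_Wl (x : A) (i m l : ℕ) :
    Commute (x - (i : A)) (Wl x m l) := by
  apply Commute.list_prod_right
  intro y hy
  simp only [Wl, List.mem_map, List.mem_range] at hy
  obtain ⟨j, -, rfl⟩ := hy
  exact commute_sub_cast x i (m + j)

lemma commute_Wl_Wl (x : A) (m l m' l' : ℕ) :
    Commute (Wl x m l) (Wl x m' l') := by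
  apply Commute.list_prod_right
  intro y hy
  simp only [Wl, List.mem_map, List.mem_range] at hy
  obtain ⟨j, -, rfl⟩ := hy
  exact (commute_sub_Wl x (m' + j) m l).symm

/-- cancel a nonzero natural scalar written as a cast ring element -/
lemma cancel_nat_cast {n : ℕ} (hn : n ≠ 0) {z : A} (h : ((n : ℕ) : A) * z = 0) : z = 0 := by
  have h2 : ((n : ℚ)) • z = 0 := by
    rw [Algebra.smul_def, show ((algebraMap ℚ A) (n:ℚ)) = ((n:ℕ) : A) by simp]
    exact h
  have h3 : z = ((n:ℚ))⁻¹ • (((n:ℚ)) • z) := by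
    rw [smul_smul, inv_mul_cancel₀ (by exact_mod_cast hn), one_smul]
  rw [h3, h2, smul_zero]

end Ring

section Rels

variable {A : Type*} [Ring A] [Algebra ℚ A] (d : ℕ) (e f H2 : A)

/-- f shifts a window factor -/
lemma f_shift (hFH : f * H2 = H2 * f - f) (n : ℕ) :
    f * (H2 - (n : A)) = (H2 - ((n + 1 : ℕ) : A)) * f := by
  have hnf : f * (n:A) = (n:A) * f := (Nat.cast_commute n f).symm.eq
  push_cast
  rw [mul_sub, hFH, hnf]
  noncomm_ring

lemma e_shift (hEH : e * H2 = H2 * e + e) (n : ℕ) :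
    e * (H2 - ((n + 1 : ℕ) : A)) = (H2 - (n : A)) * e := by
  have hnf : e * (n:A) = (n:A) * e := (Nat.cast_commute n e).symm.eq
  push_cast
  rw [mul_sub, hEH, mul_add, hnf]
  noncomm_ring

lemma f_Wl (hFH : f * H2 = H2 * f - f) (m l : ℕ) :
    f * Wl H2 m l = Wl H2 (m + 1) l * f := by
  induction l with
  | zero => simp [Wl_zero]
  | succ l ih =>
    rw [Wl_succ, ← mul_assoc, ih, mul_assoc, f_shift f H2 hFH, ← mul_assoc,
      Wl_succ H2 (m + 1) l, show m + 1 + l = m + l + 1 from by omega]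

lemma fpow_Wl (hFH : f * H2 = H2 * f - f) (a m l : ℕ) :
    f ^ a * Wl H2 m l = Wl H2 (m + a) l * f ^ a := by
  induction a with
  | zero => simp
  | succ a ih =>
    rw [pow_succ', mul_assoc, ih, ← mul_assoc, f_Wl f H2 hFH, mul_assoc, ← pow_succ',
      show m + a + 1 = m + (a + 1) from by omega]

lemma e_Wl (hEH : e * H2 = H2 * e + e) (m l : ℕ) :
    e * Wl H2 (m + 1) l = Wl H2 m l * e := by
  induction l with
  | zero => simp [Wl_zero]
  | succ l ih =>
    rw [Wl_succ, ← mul_assoc, ih, mul_assoc, show m + 1 + l = (m + l) + 1 by omega,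
      e_shift e H2 hEH, ← mul_assoc, ← Wl_succ]

/-- The key vanishing lemma, f-side: `(H2-a)(H2-a-1)⋯(H2-d) f^a = 0`. -/
lemma G_f (hFH : f * H2 = H2 * f - f) (hW : Wl H2 0 (d + 1) = 0) :
    ∀ a l : ℕ, a + l = d + 1 → Wl H2 a l * f ^ a = 0 := by
  intro a
  induction a with
  | zero => intro l hl; simpa [show l = d + 1 by omega] using hW
  | succ a ih =>
    intro l hl
    have P : Wl H2 a (l + 1) * f ^ a = 0 := ih (l + 1) (by omega)
    have B1 : (H2 - (a : A)) * (Wl H2 (a + 1) l * f ^ (a + 1)) = 0 := by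
      have := congrArg (· * f) P
      simp only [zero_mul] at this
      rw [mul_assoc, ← pow_succ] at this
      rw [← this, Wl_succ', mul_assoc]
    have B2 : (H2 - ((d + 1 : ℕ) : A)) * (Wl H2 (a + 1) l * f ^ (a + 1)) = 0 := by
      have h := congrArg (f * ·) P
      simp only [mul_zero] at h
      rw [← mul_assoc, f_Wl f H2 hFH, mul_assoc, ← pow_succ'] at h
      rw [Wl_succ, show a + 1 + l = d + 1 from by omega] at h
      rw [← mul_assoc, (commute_sub_Wl H2 (d + 1) (a + 1) l).eq]
      exact h
    have key : ((d + 1 - a : ℕ) : A) * (Wl H2 (a + 1) l * f ^ (a + 1)) = 0 := by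
      have ha : a ≤ d + 1 := by omega
      have hc : ((d + 1 - a : ℕ) : A) = (H2 - (a : A)) - (H2 - ((d + 1 : ℕ) : A)) := by
        push_cast [ha]
        noncomm_ring
      rw [hc, sub_mul, B1, B2, sub_zero]
    exact cancel_nat_cast (by omega) key

/-- The key vanishing lemma, e-side: `H2(H2-1)⋯(H2-(d-c)) e^c = 0`. -/
lemma G_e (hEH : e * H2 = H2 * e + e) (hW : Wl H2 0 (d + 1) = 0) :
    ∀ c l : ℕ, c + l = d + 1 → Wl H2 0 l * e ^ c = 0 := by
  intro c
  induction c with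
  | zero => intro l hl; simpa [show l = d + 1 by omega] using hW
  | succ c ih =>
    intro l hl
    have P : Wl H2 0 (l + 1) * e ^ c = 0 := ih (l + 1) (by omega)
    have B1 : (H2 - (l : A)) * (Wl H2 0 l * e ^ (c + 1)) = 0 := by
      have h := congrArg (· * e) P
      simp only [zero_mul] at h
      rw [mul_assoc, ← pow_succ, Wl_succ, Nat.zero_add] at h
      rw [← mul_assoc, (commute_sub_Wl H2 l 0 l).eq]
      exact h
    have B2 : (H2 + 1) * (Wl H2 0 l * e ^ (c + 1)) = 0 := by
      have h := congrArg (e * ·) P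
      simp only [mul_zero] at h
      rw [← mul_assoc, Wl_succ', ← mul_assoc] at h
      have he0 : e * (H2 - ((0 : ℕ) : A)) = (H2 + 1) * e := by
        rw [Nat.cast_zero, sub_zero, hEH]
        noncomm_ring
      rw [he0] at h
      rw [mul_assoc (H2 + 1) e, e_Wl e H2 hEH, mul_assoc (H2 + 1), mul_assoc (Wl H2 0 l), ← pow_succ'] at h
      exact h
    have key : ((l + 1 : ℕ) : A) * (Wl H2 0 l * e ^ (c + 1)) = 0 := by
      have hcast : ((l + 1 : ℕ) : A) = (H2 + 1) - (H2 - ((l : ℕ) : A)) := by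
        push_cast; noncomm_ring
      rw [hcast, sub_mul, B1, B2, zero_sub, neg_zero]
    exact cancel_nat_cast (by omega) key

/-- abinom in terms of windows -/
lemma abinom_eq_Wl (b : ℕ) : abinom H2 b = ((b.factorial : ℚ)⁻¹) • Wl H2 0 b := by
  rw [abinom, Wl]
  congr 2
  ext j
  norm_num

/-- Vanishing: `f^(a) · binom(H2,b) = 0` when `a + b > d`. -/
lemma V_f (hFH : f * H2 = H2 * f - f) (hW : Wl H2 0 (d + 1) = 0)
    (a b : ℕ) (h : d < a + b) :
    dpow f a * abinom H2 b = 0 := by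
  rw [dpow_eq, abinom_eq_Wl, smul_mul_assoc, mul_smul_comm]
  rcases le_or_gt a d with had | had
  · -- a ≤ d, so b ≥ d + 1 - a
    set l := d + 1 - a with hld
    have hG : Wl H2 a l * f ^ a = 0 := G_f d f H2 hFH hW a l (by omega)
    have h1 : f ^ a * Wl H2 0 b = Wl H2 a b * f ^ a := by
      have := fpow_Wl f H2 hFH a 0 b
      simpa using this
    have h2 : Wl H2 a b = Wl H2 (a + l) (b - l) * Wl H2 a l := by
      calc Wl H2 a b = Wl H2 a (l + (b - l)) := by congr 1; omega
      _ = Wl H2 a l * Wl H2 (a + l) (b - l) := Wl_split H2 a l (b - l)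
      _ = Wl H2 (a + l) (b - l) * Wl H2 a l := (commute_Wl_Wl H2 a l (a + l) (b - l)).eq
    have hz : f ^ a * Wl H2 0 b = 0 := by
      rw [h1, h2, mul_assoc, hG, mul_zero]
    rw [hz, smul_zero, smul_zero]
  · -- a > d : f^a = 0
    have hfa : f ^ a = 0 := by
      have h1 : Wl H2 (d+1) 0 * f ^ (d+1) = 0 := G_f d f H2 hFH hW (d+1) 0 (by omega)
      rw [Wl_zero, one_mul] at h1
      calc f ^ a = f ^ (d + 1) * f ^ (a - (d+1)) := by rw [← pow_add]; congr 1; omega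
      _ = 0 := by rw [h1, zero_mul]
    rw [hfa, zero_mul, smul_zero, smul_zero]


/-- Vanishing: `binom(H2,b) · e^(c) = 0` when `b + c > d`. -/
lemma V_e (hEH : e * H2 = H2 * e + e) (hW : Wl H2 0 (d + 1) = 0)
    (b c : ℕ) (h : d < b + c) :
    abinom H2 b * dpow e c = 0 := by
  rw [dpow_eq, abinom_eq_Wl, smul_mul_assoc, mul_smul_comm]
  rcases le_or_gt c d with hcd | hcd
  · set l := d + 1 - c with hld
    have hG : Wl H2 0 l * e ^ c = 0 := G_e d e H2 hEH hW c l (by omega)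
    have h2 : Wl H2 0 b * e ^ c = Wl H2 l (b - l) * (Wl H2 0 l * e ^ c) := by
      calc Wl H2 0 b * e ^ c = Wl H2 0 (l + (b - l)) * e ^ c := by
            congr 2; omega
      _ = Wl H2 0 l * Wl H2 (0 + l) (b - l) * e ^ c := by rw [Wl_split]
      _ = Wl H2 l (b - l) * Wl H2 0 l * e ^ c := by
            rw [Nat.zero_add, (commute_Wl_Wl H2 0 l l (b - l)).eq]
      _ = Wl H2 l (b - l) * (Wl H2 0 l * e ^ c) := by rw [mul_assoc]
    rw [h2, hG, mul_zero, smul_zero, smul_zero]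
  · have hea : e ^ c = 0 := by
      have h1 : Wl H2 0 0 * e ^ (d + 1) = 0 := G_e d e H2 hEH hW (d + 1) 0 (by omega)
      rw [Wl_zero, one_mul] at h1
      calc e ^ c = e ^ (d + 1) * e ^ (c - (d + 1)) := by rw [← pow_add]; congr 1; omega
      _ = 0 := by rw [h1, zero_mul]
    rw [hea, mul_zero, smul_zero, smul_zero]

lemma neg_map_prod : ∀ l : List A, (l.map (fun z => -z)).prod = (-1 : A) ^ l.length * l.prod := by
  intro l
  induction l with
  | nil => simp
  | cons a t ih =>
    rw [List.map_cons, List.prod_cons, List.prod_cons, ih, List.length_cons]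
    have hc : a * (-1 : A) ^ t.length = (-1 : A) ^ t.length * a :=
      ((Commute.neg_one_left a).pow_left t.length).symm.eq
    calc (-a) * ((-1 : A) ^ t.length * t.prod) = (-1) * (a * (-1 : A) ^ t.length * t.prod) := by
          rw [neg_eq_neg_one_mul a]; noncomm_ring
    _ = (-1) * ((-1 : A) ^ t.length * a * t.prod) := by rw [hc]
    _ = (-1 : A) ^ (t.length + 1) * (a * t.prod) := by rw [pow_succ']; noncomm_ring

lemma nat_rev_range : ∀ n : ℕ, (List.range (n + 1)).map (fun i => n - i) = (List.range (n + 1)).reverse := by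
  intro n
  induction n with
  | zero => rfl
  | succ n ih =>
    have h1 : List.range (n + 2) = [0] ++ (List.range (n + 1)).map (fun x => 1 + x) := by
      rw [show n + 2 = 1 + (n + 1) from by omega, List.range_add]
      rfl
    conv_lhs => rw [h1]
    rw [List.map_append, List.map_map]
    have h2 : ((fun i => n + 1 - i) ∘ fun x => 1 + x) = fun i => n - i := by
      funext i; simp only [Function.comp_apply]; omega
    rw [h2, ih]
    conv_rhs => rw [show n + 2 = (n + 1) + 1 from rfl, List.range_succ, List.reverse_concat]
    simp

lemma hW_of_hmin (H1 : A) (hsum : H1 + H2 = (d : A))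
    (hmin : ((List.range (d + 1)).map (fun i : ℕ => H1 - (i : A))).prod = 0) :
    Wl H2 0 (d + 1) = 0 := by
  have hH1 : H1 = (d : A) - H2 := eq_sub_of_add_eq hsum
  -- rewrite the minimal polynomial list
  have hlist : (List.range (d + 1)).map (fun i : ℕ => H1 - (i : A)) =
      ((List.range (d + 1)).map (fun i : ℕ => H2 - ((d - i : ℕ) : A))).map (fun z => -z) := by
    rw [List.map_map]
    apply List.map_congr_left
    intro i hi
    simp only [List.mem_range] at hi
    simp only [Function.comp_apply]
    rw [hH1, Nat.cast_sub (by omega : i ≤ d)]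
    noncomm_ring
  rw [hlist, neg_map_prod, List.length_map, List.length_range] at hmin
  -- kill the sign
  have hP : ((List.range (d + 1)).map (fun i : ℕ => H2 - ((d - i : ℕ) : A))).prod = 0 := by
    have := congrArg (fun z => (-1 : A) ^ (d + 1) * z) hmin
    simp only [mul_zero, ← mul_assoc, ← pow_add] at this
    rw [show (d + 1) + (d + 1) = 2 * (d + 1) from by omega, pow_mul, neg_one_sq, one_pow,
      one_mul] at this
    exact this
  -- identify with the reversed window list
  have hrev : (List.range (d + 1)).map (fun i : ℕ => H2 - ((d - i : ℕ) : A)) =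
      ((List.range (d + 1)).map (fun j : ℕ => H2 - ((0 + j : ℕ) : A))).reverse := by
    rw [← List.map_reverse, ← nat_rev_range d, List.map_map]
    apply List.map_congr_left
    intro i hi
    simp only [Function.comp_apply, Nat.zero_add]
  rw [hrev] at hP
  have hpw : List.Pairwise Commute
      ((List.range (d + 1)).map (fun j : ℕ => H2 - ((0 + j : ℕ) : A))).reverse := by
    rw [List.pairwise_reverse]
    rw [List.pairwise_map]
    exact List.pairwise_iff_forall_sublist.2 (fun {x y} _ => (commute_sub_cast H2 (0 + y) (0 + x)))
  have := List.Perm.prod_eq' (List.reverse_perm _) hpw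
  rw [Wl, ← this, hP]


lemma natCast_mul_eq_smul (z : A) (k : ℕ) : ((k : ℕ) : A) * z = (k : ℚ) • z := by
  rw [Algebra.smul_def, show ((algebraMap ℚ A) (k : ℚ)) = ((k : ℕ) : A) by simp]

lemma mul_natCast_eq_smul (z : A) (k : ℕ) : z * ((k : ℕ) : A) = (k : ℚ) • z := by
  rw [(Nat.commute_cast z k).eq, natCast_mul_eq_smul]

lemma commute_H2_Wl (m l : ℕ) : Commute H2 (Wl H2 m l) := by
  apply Commute.list_prod_right
  intro y hy
  simp only [Wl, List.mem_map, List.mem_range] at hy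
  obtain ⟨j, -, rfl⟩ := hy
  exact (Commute.refl H2).sub_right (Nat.commute_cast H2 _)

/-- `H2` moved past `e^m` from the left. -/
lemma epow_H2 (hEH : e * H2 = H2 * e + e) (m : ℕ) :
    e ^ m * H2 = H2 * e ^ m + (m : ℚ) • e ^ m := by
  induction m with
  | zero => simp
  | succ m ih =>
    rw [pow_succ', mul_assoc, ih, mul_add, ← mul_assoc, hEH, mul_smul_comm, ← pow_succ']
    rw [add_mul, mul_assoc, ← pow_succ']
    push_cast
    match_scalars <;> ring

/-- The element `2H2 - d - n`. -/
noncomputable def Zc (d : ℕ) (H2 : A) (n : ℕ) : A := 2 * H2 - (d : A) - (n : A)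

lemma epow_Z (hEH : e * H2 = H2 * e + e) (c : ℕ) :
    e ^ c * Zc d H2 c = (2 * H2 + (c : A) - (d : A)) * e ^ c := by
  rw [Zc, two_mul, mul_sub, mul_sub, mul_add, epow_H2 e H2 hEH c, sub_mul, add_mul, add_mul,
    mul_natCast_eq_smul, mul_natCast_eq_smul, natCast_mul_eq_smul, natCast_mul_eq_smul]
  match_scalars <;> ring

lemma dpow_Z (hEH : e * H2 = H2 * e + e) (c : ℕ) :
    dpow e c * Zc d H2 c = (2 * H2 + (c : A) - (d : A)) * dpow e c := by
  rw [dpow_eq, smul_mul_assoc, epow_Z d e H2 hEH, mul_smul_comm]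

/-- Commuting `f` past divided powers of `e`. -/
lemma pcf (hEH : e * H2 = H2 * e + e) (hEF : f * e = e * f + 2 * H2 - (d : A)) (n : ℕ) :
    f * e ^ (n + 1) = e ^ (n + 1) * f + ((n : ℚ) + 1) • (e ^ n * Zc d H2 n) := by
  have hZe : ∀ m : ℕ, Zc d H2 m * e = e * Zc d H2 (m + 2) := by
    intro m
    have hH : H2 * e = e * H2 - e := eq_sub_of_add_eq hEH.symm
    rw [Zc, Zc, sub_mul, sub_mul, two_mul, add_mul, hH, natCast_mul_eq_smul,
      natCast_mul_eq_smul, mul_sub, mul_sub, mul_add, mul_natCast_eq_smul,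
      mul_natCast_eq_smul]
    push_cast
    match_scalars <;> ring
  induction n with
  | zero =>
    simp only [pow_one, pow_zero, one_mul, Nat.cast_zero, zero_add, one_smul, Zc,
      Nat.cast_zero, sub_zero]
    rw [hEF]
    noncomm_ring
  | succ n ih =>
    have step1 : f * e ^ (n + 2) = (e ^ (n + 1) * f) * e
        + ((n : ℚ) + 1) • (e ^ (n + 1) * Zc d H2 (n + 2)) := by
      rw [pow_succ, ← mul_assoc, ih, add_mul, smul_mul_assoc, mul_assoc (e ^ n), hZe n,
        ← mul_assoc (e ^ n), ← pow_succ]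
    rw [step1, mul_assoc, hEF]
    have h2 : e ^ (n + 1) * (e * f + 2 * H2 - (d : A)) =
        e ^ (n + 2) * f + e ^ (n + 1) * (2 * H2) - ((d : ℚ)) • e ^ (n + 1) := by
      rw [mul_sub, mul_add, ← mul_assoc, ← pow_succ, mul_natCast_eq_smul]
    rw [h2]
    simp only [Zc, mul_sub, mul_natCast_eq_smul]
    push_cast
    match_scalars <;> ring


/-- divided-power version of the `e`–`f` straightening. -/
lemma cf' (hEH : e * H2 = H2 * e + e) (hEF : f * e = e * f + 2 * H2 - (d : A)) (n : ℕ) :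
    dpow e (n + 1) * f = f * dpow e (n + 1) - dpow e n * Zc d H2 n := by
  have h := pcf d e f H2 hEH hEF n
  have h2 : e ^ (n + 1) * f = f * e ^ (n + 1) - ((n : ℚ) + 1) • (e ^ n * Zc d H2 n) := by
    rw [h]; abel
  have hne : ((n.factorial : ℚ)) ≠ 0 := by positivity
  simp only [dpow_eq, smul_mul_assoc, mul_smul_comm]
  rw [h2, smul_sub, smul_smul]
  match_scalars <;> (try (simp only [smul_eq_mul, Nat.factorial_succ]); try (push_cast); try (field_simp); try (ring))

/-- Pascal-type rule for moving `f` past `binom(H2, m+1)`. -/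
lemma ab_f (hFH : f * H2 = H2 * f - f) (m : ℕ) :
    abinom H2 (m + 1) * f = f * abinom H2 (m + 1) + f * abinom H2 m := by
  have hHf : H2 * f = f * H2 + f := by
    rw [hFH]; noncomm_ring
  have key : Wl H2 0 (m + 1) * f
      = f * Wl H2 0 (m + 1) + f * (((m + 1 : ℕ) : A) * Wl H2 0 m) := by
    have h1 : Wl H2 0 (m + 1) = H2 * Wl H2 1 m := by
      rw [Wl_succ']
      norm_num
    have h2 : Wl H2 1 m * f = f * Wl H2 0 m := (f_Wl f H2 hFH 0 m).symm
    have h3 : H2 * Wl H2 0 m = Wl H2 0 (m + 1) + ((m : ℕ) : A) * Wl H2 0 m := by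
      rw [(commute_H2_Wl H2 0 m).eq, Wl_succ, Nat.zero_add, mul_sub, natCast_mul_eq_smul,
        mul_natCast_eq_smul]
      abel
    calc Wl H2 0 (m + 1) * f = H2 * (Wl H2 1 m * f) := by rw [h1, mul_assoc]
    _ = (H2 * f) * Wl H2 0 m := by rw [h2, ← mul_assoc]
    _ = f * (H2 * Wl H2 0 m) + f * Wl H2 0 m := by rw [hHf, add_mul, mul_assoc]
    _ = f * (Wl H2 0 (m + 1) + ((m : ℕ) : A) * Wl H2 0 m) + f * Wl H2 0 m := by
        rw [h3]
    _ = f * Wl H2 0 (m + 1) + f * (((m + 1 : ℕ) : A) * Wl H2 0 m) := by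
        rw [natCast_mul_eq_smul, natCast_mul_eq_smul, mul_add, mul_smul_comm, mul_smul_comm]
        push_cast
        match_scalars <;> ring
  have hne : ((m.factorial : ℚ)) ≠ 0 := by positivity
  simp only [abinom_eq_Wl, smul_mul_assoc]
  rw [key]
  simp only [natCast_mul_eq_smul, mul_smul_comm, smul_add, smul_smul]
  match_scalars <;> (try (simp only [smul_eq_mul, Nat.factorial_succ]); try (push_cast); try (field_simp); try (ring))

/-- Multiplication rule `binom(H2,m)·H2 = (m+1)binom(H2,m+1) + m binom(H2,m)`. -/
lemma ab_H2 (m : ℕ) :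
    abinom H2 m * H2 = ((m : ℚ) + 1) • abinom H2 (m + 1) + (m : ℚ) • abinom H2 m := by
  have key : Wl H2 0 m * H2 = Wl H2 0 (m + 1) + ((m : ℕ) : A) * Wl H2 0 m := by
    rw [Wl_succ, Nat.zero_add, mul_sub, natCast_mul_eq_smul, mul_natCast_eq_smul]
    abel
  have hne : ((m.factorial : ℚ)) ≠ 0 := by positivity
  simp only [abinom_eq_Wl, smul_mul_assoc]
  rw [key]
  simp only [natCast_mul_eq_smul, smul_add, smul_smul]
  match_scalars <;> (try (simp only [smul_eq_mul, Nat.factorial_succ]); try (push_cast); try (field_simp); try (ring))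

end Rels

/-- The basis-type elements `f^(a) binom(H2,b) e^(c)`. -/
noncomputable def Xel {A : Type*} [Ring A] [Algebra ℚ A] (f H2 e : A) (a b c : ℕ) : A :=
  dpow f a * abinom H2 b * dpow e c

section XRels
variable {A : Type*} [Ring A] [Algebra ℚ A] (d : ℕ) (e f H2 : A)

lemma Xe (a b c : ℕ) :
    Xel f H2 e a b c * e = ((c : ℚ) + 1) • Xel f H2 e a b (c + 1) := by
  rw [Xel, Xel, mul_assoc, dpow_mul_self, mul_smul_comm, mul_assoc]

lemma XF0 (hFH : f * H2 = H2 * f - f) (a b : ℕ) :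
    Xel f H2 e a (b + 1) 0 * f =
      ((a : ℚ) + 1) • Xel f H2 e (a + 1) (b + 1) 0 + ((a : ℚ) + 1) • Xel f H2 e (a + 1) b 0 := by
  simp only [Xel, dpow_zero, mul_one]
  rw [mul_assoc, ab_f f H2 hFH b, mul_add, ← mul_assoc, ← mul_assoc, dpow_mul_self,
    smul_mul_assoc, smul_mul_assoc]

lemma XF1 (hEH : e * H2 = H2 * e + e) (hFH : f * H2 = H2 * f - f)
    (hEF : f * e = e * f + 2 * H2 - (d : A)) (a b c : ℕ) :
    Xel f H2 e a (b + 1) (c + 1) * f =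
      ((a : ℚ) + 1) • Xel f H2 e (a + 1) (b + 1) (c + 1)
      + ((a : ℚ) + 1) • Xel f H2 e (a + 1) b (c + 1)
      + ((d : ℚ) - (c : ℚ) - 2 * (b : ℚ) - 2) • Xel f H2 e a (b + 1) c
      - (2 * (b : ℚ) + 4) • Xel f H2 e a (b + 2) c := by
  have h4 : abinom H2 (b + 1) * (2 * H2 + (c : A) - (d : A)) =
      (2 * (b : ℚ) + 4) • abinom H2 (b + 2) + (2 * (b : ℚ) + 2 + (c : ℚ) - (d : ℚ)) • abinom H2 (b + 1) := by
    rw [mul_sub, mul_add, two_mul, mul_add, ab_H2 H2 (b + 1), mul_natCast_eq_smul,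
      mul_natCast_eq_smul]
    push_cast
    match_scalars <;> ring
  calc Xel f H2 e a (b + 1) (c + 1) * f
      = dpow f a * abinom H2 (b + 1) * (dpow e (c + 1) * f) := by rw [Xel, mul_assoc]
    _ = dpow f a * abinom H2 (b + 1) * (f * dpow e (c + 1))
        - dpow f a * abinom H2 (b + 1) * (dpow e c * Zc d H2 c) := by
        rw [cf' d e f H2 hEH hEF c, mul_sub]
    _ = dpow f a * (abinom H2 (b + 1) * f) * dpow e (c + 1)
        - dpow f a * (abinom H2 (b + 1) * (2 * H2 + (c : A) - (d : A))) * dpow e c := by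
        rw [dpow_Z d e H2 hEH c]
        simp only [mul_assoc]
    _ = ((a : ℚ) + 1) • Xel f H2 e (a + 1) (b + 1) (c + 1)
        + ((a : ℚ) + 1) • Xel f H2 e (a + 1) b (c + 1)
        + ((d : ℚ) - (c : ℚ) - 2 * (b : ℚ) - 2) • Xel f H2 e a (b + 1) c
        - (2 * (b : ℚ) + 4) • Xel f H2 e a (b + 2) c := by
        rw [ab_f f H2 hFH b, h4]
        simp only [Xel, mul_add, add_mul, smul_add, smul_sub, mul_smul_comm, smul_mul_assoc,
          ← mul_assoc]
        simp only [dpow_mul_self]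
        simp only [smul_mul_assoc, mul_smul_comm]
        match_scalars <;> ring


/-- Signed coefficients `(-1)^k binom(b+k,k)`. -/
def coefQ (b k : ℕ) : ℚ := (-1 : ℚ) ^ k * ((b + k).choose k : ℚ)

lemma coefQ_eq (b k : ℕ) :
    coefQ b k = (-1 : ℚ) ^ k * ((b + k).factorial : ℚ) / ((b.factorial : ℚ) * (k.factorial : ℚ)) := by
  rw [coefQ, Nat.cast_choose ℚ (by omega : k ≤ b + k), Nat.add_sub_cancel]
  ring

lemma coefQ_zero (b : ℕ) : coefQ b 0 = 1 := by simp [coefQ]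

lemma cs_shift (b j : ℕ) :
    ((b : ℚ) + 1) * coefQ (b + 1) j = -(((j : ℚ) + 1) * coefQ b (j + 1)) := by
  rw [coefQ_eq, coefQ_eq, show b + 1 + j = b + (j + 1) from by omega]
  rw [Nat.factorial_succ b, Nat.factorial_succ j]
  have h1 : ((b.factorial : ℚ)) ≠ 0 := by positivity
  have h2 : ((j.factorial : ℚ)) ≠ 0 := by positivity
  have h3 : ((b : ℚ) + 1) ≠ 0 := by positivity
  have h4 : ((j : ℚ) + 1) ≠ 0 := by positivity
  push_cast
  field_simp
  ring

lemma cs_absorb (b k : ℕ) :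
    ((b : ℚ) + 2 + (k : ℚ)) * coefQ (b + 1) k = ((b : ℚ) + 2) * coefQ (b + 2) k := by
  rw [coefQ_eq, coefQ_eq, show b + 2 + k = (b + 1 + k) + 1 from by omega,
    Nat.factorial_succ (b + 1 + k), Nat.factorial_succ (b + 1), Nat.factorial_succ b]
  have h1 : ((b.factorial : ℚ)) ≠ 0 := by positivity
  have h2 : ((k.factorial : ℚ)) ≠ 0 := by positivity
  have h3 : ((b : ℚ) + 1) ≠ 0 := by positivity
  have h4 : ((b : ℚ) + 2) ≠ 0 := by positivity
  push_cast
  field_simp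
  ring

lemma cs_pascal (b j : ℕ) :
    coefQ (b + 1) (j + 1) - coefQ b (j + 1) = -coefQ (b + 1) j := by
  have hp : ((b + 1) + (j + 1)).choose (j + 1) =
      (b + (j + 1)).choose j + (b + (j + 1)).choose (j + 1) := by
    rw [show (b + 1) + (j + 1) = (b + (j + 1)) + 1 from by omega]
    rw [Nat.choose_succ_succ' (b + (j + 1)) j]
  rw [coefQ, coefQ, coefQ, hp, show b + 1 + j = b + (j + 1) from by omega]
  push_cast
  ring

end XRels

/-- The straightening sums `S(a,b,c)`. -/
noncomputable def Sel {A : Type*} [Ring A] [Algebra ℚ A] (f H2 e : A) (a b c : ℕ) : A :=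
  ∑ k ∈ Finset.range (min a c + 1), coefQ b k • Xel f H2 e (a - k) (b + k) (c - k)

section SRels
variable {A : Type*} [Ring A] [Algebra ℚ A] (e f H2 : A)

lemma Sel_eq_sum_ite (a b c N : ℕ) (hN : min a c < N) :
    Sel f H2 e a b c = ∑ k ∈ Finset.range N,
      (if k ≤ min a c then coefQ b k • Xel f H2 e (a - k) (b + k) (c - k) else 0) := by
  rw [Sel]
  have h1 : ∑ k ∈ Finset.range (min a c + 1), coefQ b k • Xel f H2 e (a - k) (b + k) (c - k)
      = ∑ k ∈ Finset.range (min a c + 1),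
        (if k ≤ min a c then coefQ b k • Xel f H2 e (a - k) (b + k) (c - k) else 0) := by
    refine Finset.sum_congr rfl (fun k hk => ?_)
    simp only [Finset.mem_range] at hk
    rw [if_pos (by omega)]
  rw [h1]
  exact Finset.sum_subset (Finset.range_subset_range.2 (by omega : min a c + 1 ≤ N))
    (fun x _ hx => by
      simp only [Finset.mem_range] at hx
      rw [if_neg (by omega)])

lemma smul_Sel_eq_sum_ite (q : ℚ) (a b c N : ℕ) (hN : min a c < N) :
    q • Sel f H2 e a b c = ∑ k ∈ Finset.range N,
      (if k ≤ min a c then (q * coefQ b k) • Xel f H2 e (a - k) (b + k) (c - k) else 0) := by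
  rw [Sel_eq_sum_ite e f H2 a b c N hN, Finset.smul_sum]
  exact Finset.sum_congr rfl (fun k _ => by split_ifs <;> simp [smul_smul])

/-- `(∗e)` for `a = 0`. -/
lemma Se0 (b c : ℕ) :
    Sel f H2 e 0 b c * e = ((c : ℚ) + 1) • Sel f H2 e 0 b (c + 1) := by
  rw [Sel, Sel, show min 0 c = 0 from by omega, show min 0 (c + 1) = 0 from by omega]
  rw [Finset.sum_range_one, Finset.sum_range_one, coefQ_zero, one_smul, one_smul]
  simp only [Nat.sub_zero, Nat.add_zero]
  rw [Xe]

/-- `(∗e)`: right multiplication by `e`. -/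
lemma Se1 (a b c : ℕ) :
    Sel f H2 e (a + 1) b c * e = ((c : ℚ) + 1) • Sel f H2 e (a + 1) b (c + 1)
      + ((b : ℚ) + 1) • Sel f H2 e a (b + 1) c := by
  have step1 : Sel f H2 e (a + 1) b c * e = ∑ k ∈ Finset.range (a + c + 2),
      (if k ≤ min (a + 1) c then (((c : ℚ) + 1 - (k : ℚ)) * coefQ b k) •
        Xel f H2 e (a + 1 - k) (b + k) (c + 1 - k) else 0) := by
    rw [Sel_eq_sum_ite e f H2 (a + 1) b c (a + c + 2) (by omega), Finset.sum_mul]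
    refine Finset.sum_congr rfl (fun k _ => ?_)
    split_ifs with h
    · have hkc : k ≤ c := le_trans h (min_le_right _ _)
      rw [smul_mul_assoc, Xe, show c - k + 1 = c + 1 - k from by omega, smul_smul]
      congr 1
      rw [Nat.cast_sub hkc]
      ring
    · rw [zero_mul]
  have step2 : ((c : ℚ) + 1) • Sel f H2 e (a + 1) b (c + 1) = ∑ k ∈ Finset.range (a + c + 2),
      (if k ≤ min (a + 1) (c + 1) then (((c : ℚ) + 1) * coefQ b k) •
        Xel f H2 e (a + 1 - k) (b + k) (c + 1 - k) else 0) :=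
    smul_Sel_eq_sum_ite e f H2 ((c : ℚ) + 1) (a + 1) b (c + 1) (a + c + 2) (by omega)
  have step3 : ((b : ℚ) + 1) • Sel f H2 e a (b + 1) c = ∑ k ∈ Finset.range (a + c + 2),
      (if 1 ≤ k ∧ k ≤ min a c + 1 then (-(k : ℚ) * coefQ b k) •
        Xel f H2 e (a + 1 - k) (b + k) (c + 1 - k) else 0) := by
    rw [smul_Sel_eq_sum_ite e f H2 ((b : ℚ) + 1) a (b + 1) c (a + c + 1) (by omega)]
    conv_rhs => rw [show a + c + 2 = (a + c + 1) + 1 from rfl, Finset.sum_range_succ']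
    rw [if_neg (by omega : ¬(1 ≤ 0 ∧ 0 ≤ min a c + 1)), add_zero]
    refine Finset.sum_congr rfl (fun j _ => ?_)
    by_cases h1 : j ≤ min a c
    · rw [if_pos h1, if_pos (by omega : 1 ≤ j + 1 ∧ j + 1 ≤ min a c + 1)]
      rw [show a + 1 - (j + 1) = a - j from by omega, show c + 1 - (j + 1) = c - j from by omega,
        show b + (j + 1) = b + 1 + j from by omega]
      congr 1
      push_cast
      linear_combination cs_shift b j
    · rw [if_neg h1, if_neg (by omega : ¬(1 ≤ j + 1 ∧ j + 1 ≤ min a c + 1))]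
  rw [step1, step2, step3, ← Finset.sum_add_distrib]
  refine Finset.sum_congr rfl (fun k _ => ?_)
  rcases Nat.eq_zero_or_pos k with rfl | hk
  · rw [if_pos (by omega : 0 ≤ min (a + 1) c), if_pos (by omega : 0 ≤ min (a + 1) (c + 1)),
      if_neg (by omega : ¬(1 ≤ 0 ∧ 0 ≤ min a c + 1)), add_zero]
    match_scalars
    push_cast
    ring
  · by_cases h1 : k ≤ min (a + 1) c
    · rw [if_pos h1, if_pos (by omega : k ≤ min (a + 1) (c + 1)),
        if_pos (by omega : 1 ≤ k ∧ k ≤ min a c + 1), ← add_smul]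
      congr 1
      ring
    · by_cases h2 : k ≤ min (a + 1) (c + 1)
      · have hk2 : k = c + 1 := by omega
        rw [if_neg h1, if_pos h2, if_pos (by omega : 1 ≤ k ∧ k ≤ min a c + 1), ← add_smul]
        subst hk2
        match_scalars
        push_cast
        ring
      · rw [if_neg h1, if_neg h2, if_neg (by omega : ¬(1 ≤ k ∧ k ≤ min a c + 1)), add_zero]

end SRels

section SF
variable {A : Type*} [Ring A] [Algebra ℚ A] (d : ℕ) (e f H2 : A)

/-- `(∗F)`: right multiplication by `f`. -/
lemma SFlem (hEH : e * H2 = H2 * e + e) (hFH : f * H2 = H2 * f - f)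
    (hEF : f * e = e * f + 2 * H2 - (d : A)) (a B c : ℕ) :
    Sel f H2 e a (B + 1) (c + 1) * f
      = ((a : ℚ) + 1) • Sel f H2 e (a + 1) (B + 1) (c + 1)
      + ((a : ℚ) + 1) • Sel f H2 e (a + 1) B (c + 1)
      + ((d : ℚ) - (a : ℚ) - (B : ℚ) - (c : ℚ) - 1) • Sel f H2 e a (B + 1) c
      - ((B : ℚ) + 2) • Sel f H2 e a (B + 2) c := by
  classical
  -- the four pieces of the pointwise expansion of the left side
  set T1 : ℕ → A := fun k => if k ≤ min a (c + 1) then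
    (((a : ℚ) + 1 - (k : ℚ)) * coefQ (B + 1) k) • Xel f H2 e (a + 1 - k) (B + 1 + k) (c + 1 - k)
    else 0 with hT1def
  set T2 : ℕ → A := fun k => if k ≤ min a (c + 1) then
    (((a : ℚ) + 1 - (k : ℚ)) * coefQ (B + 1) k) • Xel f H2 e (a + 1 - k) (B + k) (c + 1 - k)
    else 0 with hT2def
  set T3 : ℕ → A := fun k => if k ≤ min a c then
    (((d : ℚ) - (c : ℚ) - 2 * (B : ℚ) - 2 - (k : ℚ)) * coefQ (B + 1) k) •
      Xel f H2 e (a - k) (B + 1 + k) (c - k) else 0 with hT3def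
  set T4 : ℕ → A := fun k => if k ≤ min a c then
    (-(2 * (B : ℚ) + 4 + 2 * (k : ℚ)) * coefQ (B + 1) k) •
      Xel f H2 e (a - k) (B + 2 + k) (c - k) else 0 with hT4def
  -- the right-hand side pieces
  set R1 : ℕ → A := fun k => if k ≤ min (a + 1) (c + 1) then
    (((a : ℚ) + 1) * coefQ (B + 1) k) • Xel f H2 e (a + 1 - k) (B + 1 + k) (c + 1 - k)
    else 0 with hR1def
  set R2 : ℕ → A := fun k => if k ≤ min (a + 1) (c + 1) then
    (((a : ℚ) + 1) * coefQ B k) • Xel f H2 e (a + 1 - k) (B + k) (c + 1 - k) else 0 with hR2def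
  set R3 : ℕ → A := fun k => if k ≤ min a c then
    (((d : ℚ) - (a : ℚ) - (B : ℚ) - (c : ℚ) - 1) * coefQ (B + 1) k) •
      Xel f H2 e (a - k) (B + 1 + k) (c - k) else 0 with hR3def
  set R4 : ℕ → A := fun k => if k ≤ min a c then
    (((B : ℚ) + 2) * coefQ (B + 2) k) • Xel f H2 e (a - k) (B + 2 + k) (c - k) else 0 with hR4def
  -- the bridge pieces
  set D1 : ℕ → A := fun k => if k ≤ min (a + 1) (c + 1) then
    (-(k : ℚ) * coefQ (B + 1) k) • Xel f H2 e (a + 1 - k) (B + 1 + k) (c + 1 - k)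
    else 0 with hD1def
  set D2 : ℕ → A := fun k => if k ≤ min (a + 1) (c + 1) then
    (-(k : ℚ) * coefQ (B + 1) k + ((a : ℚ) + 1) * (coefQ (B + 1) k - coefQ B k)) •
      Xel f H2 e (a + 1 - k) (B + k) (c + 1 - k) else 0 with hD2def
  set M4 : ℕ → A := fun k => if k ≤ min a c then
    (((B : ℚ) + 2) * coefQ (B + 2) k) • Xel f H2 e (a - k) (B + 2 + k) (c - k) else 0 with hM4def
  set M3 : ℕ → A := fun k => if k ≤ min a c then
    (((B : ℚ) + 2) * coefQ (B + 2) k - ((a : ℚ) + 1) * coefQ (B + 1) k) •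
      Xel f H2 e (a - k) (B + 1 + k) (c - k) else 0 with hM3def
  -- Step 1: expand the left-hand side pointwise
  have hL : Sel f H2 e a (B + 1) (c + 1) * f
      = ∑ k ∈ Finset.range (a + c + 2), (T1 k + T2 k + T3 k + T4 k) := by
    rw [Sel_eq_sum_ite e f H2 a (B + 1) (c + 1) (a + c + 2) (by omega), Finset.sum_mul]
    refine Finset.sum_congr rfl (fun k _ => ?_)
    simp only [hT1def, hT2def, hT3def, hT4def]
    by_cases hk : k ≤ min a c
    · have hka : k ≤ a := le_trans hk (min_le_left _ _)
      have hkc : k ≤ c := le_trans hk (min_le_right _ _)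
      rw [if_pos (by omega : k ≤ min a (c + 1)), smul_mul_assoc,
        show B + 1 + k = (B + k) + 1 from by omega, show c + 1 - k = (c - k) + 1 from by omega,
        XF1 d e f H2 hEH hFH hEF (a - k) (B + k) (c - k),
        show a - k + 1 = a + 1 - k from by omega, show B + k + 1 = B + 1 + k from by omega,
        show B + k + 2 = B + 2 + k from by omega, show c - k + 1 = c + 1 - k from by omega,
        if_pos (by omega : k ≤ min a (c + 1)), if_pos (by omega : k ≤ min a (c + 1)),
        if_pos hk, if_pos hk]
      simp only [smul_add, smul_sub, smul_smul]
      match_scalars <;>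
        (try simp only [Nat.cast_sub hka, Nat.cast_sub hkc]
         try push_cast
         ring)
    · by_cases hk2 : k ≤ min a (c + 1)
      · have hka : k ≤ a := le_trans hk2 (min_le_left _ _)
        have hkc : k = c + 1 := by omega
        rw [if_pos hk2, smul_mul_assoc,
          show c + 1 - k = 0 from by omega, show B + 1 + k = (B + k) + 1 from by omega,
          XF0 e f H2 hFH (a - k) (B + k),
          show a - k + 1 = a + 1 - k from by omega, show B + k + 1 = B + 1 + k from by omega,
          if_pos hk2, if_pos hk2, if_neg hk, if_neg hk]
        simp only [smul_add, smul_smul, add_zero]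
        match_scalars <;>
          (try simp only [Nat.cast_sub hka]
           try push_cast
           ring)
      · rw [if_neg hk2, if_neg hk2, if_neg hk2, if_neg hk, if_neg hk, zero_mul]
        simp
  -- Step 2: identify the right-hand side sums
  have hR1 : ((a : ℚ) + 1) • Sel f H2 e (a + 1) (B + 1) (c + 1)
      = ∑ k ∈ Finset.range (a + c + 2), R1 k :=
    smul_Sel_eq_sum_ite e f H2 _ (a + 1) (B + 1) (c + 1) (a + c + 2) (by omega)
  have hR2 : ((a : ℚ) + 1) • Sel f H2 e (a + 1) B (c + 1)
      = ∑ k ∈ Finset.range (a + c + 2), R2 k :=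
    smul_Sel_eq_sum_ite e f H2 _ (a + 1) B (c + 1) (a + c + 2) (by omega)
  have hR3 : ((d : ℚ) - (a : ℚ) - (B : ℚ) - (c : ℚ) - 1) • Sel f H2 e a (B + 1) c
      = ∑ k ∈ Finset.range (a + c + 2), R3 k :=
    smul_Sel_eq_sum_ite e f H2 _ a (B + 1) c (a + c + 2) (by omega)
  have hR4 : ((B : ℚ) + 2) • Sel f H2 e a (B + 2) c
      = ∑ k ∈ Finset.range (a + c + 2), R4 k :=
    smul_Sel_eq_sum_ite e f H2 _ a (B + 2) c (a + c + 2) (by omega)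
  -- Step 3: pointwise T1 = R1 + D1, T2 = R2 + D2
  have hTR1 : ∀ k, T1 k = R1 k + D1 k := by
    intro k
    simp only [hT1def, hR1def, hD1def]
    by_cases h1 : k ≤ min a (c + 1)
    · rw [if_pos h1, if_pos (by omega : k ≤ min (a + 1) (c + 1)),
        if_pos (by omega : k ≤ min (a + 1) (c + 1)), ← add_smul]
      congr 1
      ring
    · by_cases h2 : k ≤ min (a + 1) (c + 1)
      · have hka : k = a + 1 := by omega
        rw [if_neg h1, if_pos h2, if_pos h2, ← add_smul]
        subst hka
        rw [eq_comm, smul_eq_zero]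
        left
        push_cast
        ring
      · rw [if_neg h1, if_neg h2, if_neg h2, add_zero]
  have hTR2 : ∀ k, T2 k = R2 k + D2 k := by
    intro k
    simp only [hT2def, hR2def, hD2def]
    by_cases h1 : k ≤ min a (c + 1)
    · rw [if_pos h1, if_pos (by omega : k ≤ min (a + 1) (c + 1)),
        if_pos (by omega : k ≤ min (a + 1) (c + 1)), ← add_smul]
      congr 1
      ring
    · by_cases h2 : k ≤ min (a + 1) (c + 1)
      · have hka : k = a + 1 := by omega
        rw [if_neg h1, if_pos h2, if_pos h2, ← add_smul]
        subst hka
        rw [eq_comm, smul_eq_zero]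
        left
        push_cast
        ring
      · rw [if_neg h1, if_neg h2, if_neg h2, add_zero]
  -- Step 4: the shifted sums
  have hD1M4 : ∑ k ∈ Finset.range (a + c + 2), D1 k
      = ∑ k ∈ Finset.range (a + c + 2), M4 k := by
    rw [show a + c + 2 = (a + c + 1) + 1 from rfl, Finset.sum_range_succ' D1,
      Finset.sum_range_succ M4]
    have hd0 : D1 0 = 0 := by
      simp only [hD1def]
      rw [if_pos (by omega : (0 : ℕ) ≤ min (a + 1) (c + 1))]
      norm_num
    have hm0 : M4 (a + c + 1) = 0 := by
      simp only [hM4def]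
      rw [if_neg (by omega : ¬(a + c + 1 ≤ min a c))]
    rw [hd0, hm0, add_zero, add_zero]
    refine Finset.sum_congr rfl (fun j _ => ?_)
    simp only [hD1def, hM4def]
    by_cases hj : j ≤ min a c
    · rw [if_pos (by omega : j + 1 ≤ min (a + 1) (c + 1)), if_pos hj]
      rw [show a + 1 - (j + 1) = a - j from by omega,
        show c + 1 - (j + 1) = c - j from by omega,
        show B + 1 + (j + 1) = B + 2 + j from by omega]
      congr 1
      have h1 := cs_shift (B + 1) j
      rw [show B + 1 + 1 = B + 2 from by omega] at h1
      push_cast at h1 ⊢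
      linear_combination -h1
    · rw [if_neg (by omega : ¬(j + 1 ≤ min (a + 1) (c + 1))), if_neg hj]
  have hD2M3 : ∑ k ∈ Finset.range (a + c + 2), D2 k
      = ∑ k ∈ Finset.range (a + c + 2), M3 k := by
    rw [show a + c + 2 = (a + c + 1) + 1 from rfl, Finset.sum_range_succ' D2,
      Finset.sum_range_succ M3]
    have hd0 : D2 0 = 0 := by
      simp only [hD2def]
      rw [if_pos (by omega : (0 : ℕ) ≤ min (a + 1) (c + 1))]
      rw [coefQ_zero, coefQ_zero]
      norm_num
    have hm0 : M3 (a + c + 1) = 0 := by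
      simp only [hM3def]
      rw [if_neg (by omega : ¬(a + c + 1 ≤ min a c))]
    rw [hd0, hm0, add_zero, add_zero]
    refine Finset.sum_congr rfl (fun j _ => ?_)
    simp only [hD2def, hM3def]
    by_cases hj : j ≤ min a c
    · rw [if_pos (by omega : j + 1 ≤ min (a + 1) (c + 1)), if_pos hj]
      rw [show a + 1 - (j + 1) = a - j from by omega,
        show c + 1 - (j + 1) = c - j from by omega,
        show B + (j + 1) = B + 1 + j from by omega]
      congr 1
      have h1 := cs_shift (B + 1) j
      rw [show B + 1 + 1 = B + 2 from by omega] at h1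
      have h2 := cs_pascal B j
      push_cast at h1 h2 ⊢
      linear_combination -h1 + ((a : ℚ) + 1) * h2
    · rw [if_neg (by omega : ¬(j + 1 ≤ min (a + 1) (c + 1))), if_neg hj]
  -- Step 5: the final pointwise combination
  have hfin : ∀ k, T3 k + T4 k + M4 k + M3 k = R3 k - R4 k := by
    intro k
    simp only [hT3def, hT4def, hM4def, hM3def, hR3def, hR4def]
    split_ifs with hk
    · have habs := cs_absorb B k
      match_scalars <;>
        first
          | linear_combination habs
          | linear_combination -habs
          | linear_combination 2 * habs
          | linear_combination (-2 : ℚ) * habs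
          | ring
    · simp
  -- Assemble everything
  have hsum : ∑ k ∈ Finset.range (a + c + 2), (T1 k + T2 k + T3 k + T4 k)
      = ∑ k ∈ Finset.range (a + c + 2), ((R1 k + D1 k) + (R2 k + D2 k) + T3 k + T4 k) :=
    Finset.sum_congr rfl (fun k _ => by rw [hTR1 k, hTR2 k])
  rw [hL, hsum]
  simp only [Finset.sum_add_distrib]
  rw [hR1, hR2, hR3, hR4, hD1M4, hD2M3]
  have hlast : ∑ k ∈ Finset.range (a + c + 2), T3 k + ∑ k ∈ Finset.range (a + c + 2), T4 k
      + ∑ k ∈ Finset.range (a + c + 2), M4 k + ∑ k ∈ Finset.range (a + c + 2), M3 k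
      = ∑ k ∈ Finset.range (a + c + 2), R3 k - ∑ k ∈ Finset.range (a + c + 2), R4 k := by
    rw [← Finset.sum_add_distrib, ← Finset.sum_add_distrib, ← Finset.sum_add_distrib,
      ← Finset.sum_sub_distrib]
    exact Finset.sum_congr rfl (fun k _ => hfin k)
  have hr3 : ∑ k ∈ Finset.range (a + c + 2), R3 k
      = (∑ k ∈ Finset.range (a + c + 2), T3 k + ∑ k ∈ Finset.range (a + c + 2), T4 k
        + ∑ k ∈ Finset.range (a + c + 2), M4 k + ∑ k ∈ Finset.range (a + c + 2), M3 k)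
        + ∑ k ∈ Finset.range (a + c + 2), R4 k :=
    sub_eq_iff_eq_add.mp hlast.symm
  rw [hr3]
  abel

end SF

section Core
variable {A : Type*} [Ring A] [Algebra ℚ A] (d : ℕ) (e f H2 : A)

lemma Sel_a0 (b c : ℕ) : Sel f H2 e 0 b c = Xel f H2 e 0 b c := by
  rw [Sel, show min 0 c = 0 from by omega, Finset.sum_range_one, coefQ_zero, one_smul]
  norm_num

lemma Sel_c0 (a b : ℕ) : Sel f H2 e a b 0 = Xel f H2 e a b 0 := by
  rw [Sel, show min a 0 = 0 from by omega, Finset.sum_range_one, coefQ_zero, one_smul]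
  norm_num

lemma Xel_vanish_f (hFH : f * H2 = H2 * f - f) (hW : Wl H2 0 (d + 1) = 0)
    (a b c : ℕ) (h : d < a + b) : Xel f H2 e a b c = 0 := by
  rw [Xel, V_f d f H2 hFH hW a b h, zero_mul]

lemma Xel_vanish_e (hEH : e * H2 = H2 * e + e) (hW : Wl H2 0 (d + 1) = 0)
    (a b c : ℕ) (h : d < b + c) : Xel f H2 e a b c = 0 := by
  rw [Xel, mul_assoc, V_e d e H2 hEH hW b c h, mul_zero]

/-- The core straightening: `S(a,b,c) = 0` whenever `a + b + c > d`. -/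
theorem Sel_vanish (hEH : e * H2 = H2 * e + e) (hFH : f * H2 = H2 * f - f)
    (hEF : f * e = e * f + 2 * H2 - (d : A)) (hW : Wl H2 0 (d + 1) = 0) :
    ∀ c a b : ℕ, d < a + b + c → Sel f H2 e a b c = 0 := by
  intro c
  induction c with
  | zero =>
    intro a b h
    rw [Sel_c0]
    exact Xel_vanish_f d e f H2 hFH hW a b 0 (by omega)
  | succ c IH =>
    have claim1 : ∀ a b : ℕ, d + 1 < a + b + (c + 1) → Sel f H2 e a b (c + 1) = 0 := by
      intro a b h
      match a with
      | 0 =>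
        rw [Sel_a0]
        exact Xel_vanish_e d e f H2 hEH hW 0 b (c + 1) (by omega)
      | a + 1 =>
        have he := Se1 e f H2 a b c
        rw [IH (a + 1) b (by omega), IH a (b + 1) (by omega), zero_mul, smul_zero,
          add_zero] at he
        have := he.symm
        rcases smul_eq_zero.mp this with h1 | h2
        · exfalso
          have : ((c : ℚ)) + 1 > 0 := by positivity
          linarith
        · exact h2
    have claim2 : ∀ a b : ℕ, a + b + (c + 1) = d + 1 → Sel f H2 e a b (c + 1) = 0 := by
      intro a
      induction a with
      | zero =>
        intro b hb
        rw [Sel_a0]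
        exact Xel_vanish_e d e f H2 hEH hW 0 b (c + 1) (by omega)
      | succ a IHa =>
        intro b hb
        have hf := SFlem d e f H2 hEH hFH hEF a b c
        have h1 : Sel f H2 e a (b + 1) (c + 1) = 0 := IHa (b + 1) (by omega)
        have h2 : Sel f H2 e (a + 1) (b + 1) (c + 1) = 0 := claim1 (a + 1) (b + 1) (by omega)
        have h4 : Sel f H2 e a (b + 2) c = 0 := IH a (b + 2) (by omega)
        have hco : ((d : ℚ) - (a : ℚ) - (b : ℚ) - (c : ℚ) - 1) = 0 := by
          have hd : d = a + b + c + 1 := by omega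
          rw [hd]
          push_cast
          ring
        rw [h1, h2, h4, hco] at hf
        simp only [zero_mul, smul_zero, zero_smul, add_zero, zero_add, sub_zero] at hf
        rcases smul_eq_zero.mp hf.symm with hx | hx
        · exfalso
          have : ((a : ℚ)) + 1 > 0 := by positivity
          linarith
        · exact hx
    intro a b h
    rcases lt_or_ge (d + 1) (a + b + (c + 1)) with h2 | h2
    · exact claim1 a b h2
    · exact claim2 a b (by omega)

end Core

section Assembly
variable {A : Type*} [Ring A] [Algebra ℚ A] (d : ℕ) (e f H2 : A)

lemma neg_one_pow_sub (k j : ℕ) (h : j ≤ k) : (-1 : ℚ) ^ (k - j) = (-1) ^ k * (-1) ^ j := by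
  have hsq : (-1 : ℚ) ^ j * (-1 : ℚ) ^ j = 1 := by
    rw [← pow_add, ← two_mul, pow_mul]
    norm_num
  have hmain : (-1 : ℚ) ^ (k - j) * (-1 : ℚ) ^ j = (-1) ^ k := by
    rw [← pow_add]
    congr 1
    omega
  calc (-1 : ℚ) ^ (k - j) = (-1 : ℚ) ^ (k - j) * ((-1 : ℚ) ^ j * (-1 : ℚ) ^ j) := by
        rw [hsq, mul_one]
  _ = ((-1 : ℚ) ^ (k - j) * (-1 : ℚ) ^ j) * (-1 : ℚ) ^ j := by ring
  _ = (-1) ^ k * (-1) ^ j := by rw [hmain]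

lemma alt_sum (k m : ℕ) :
    ∑ j ∈ Finset.range (m + 1), ((-1 : ℚ) ^ j * ((k + 1).choose j : ℚ))
      = (-1 : ℚ) ^ m * ((k.choose m : ℚ)) := by
  induction m with
  | zero => simp
  | succ m ih =>
    rw [Finset.sum_range_succ, ih, Nat.choose_succ_succ' k m]
    push_cast
    ring

lemma trinom (b k j : ℕ) (hj : j ≤ k) :
    ((b + j).choose j : ℚ) * ((b + k).choose (k - j) : ℚ)
      = ((b + k).choose k : ℚ) * ((k.choose j) : ℚ) := by
  rw [Nat.cast_choose ℚ (by omega : j ≤ b + j), Nat.cast_choose ℚ (by omega : k - j ≤ b + k),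
    Nat.cast_choose ℚ (by omega : k ≤ b + k), Nat.cast_choose ℚ hj,
    show b + j - j = b from by omega, show b + k - (k - j) = b + j from by omega,
    show b + k - k = b from by omega]
  have h1 : ((b.factorial : ℚ)) ≠ 0 := by positivity
  have h2 : ((j.factorial : ℚ)) ≠ 0 := by positivity
  have h3 : (((k - j).factorial : ℚ)) ≠ 0 := by positivity
  have h4 : (((b + j).factorial : ℚ)) ≠ 0 := by positivity
  have h5 : ((k.factorial : ℚ)) ≠ 0 := by positivity
  field_simp

lemma gamma_eval (b K m : ℕ) (hm : m ≤ K + 1) :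
    ∑ j ∈ Finset.range (m + 1), (((b + j).choose j : ℚ) * coefQ (b + j) (K + 1 - j))
      = ((-1 : ℚ) ^ (K + 1) * ((b + (K + 1)).choose (K + 1) : ℚ))
        * ((-1 : ℚ) ^ m * ((K.choose m : ℚ))) := by
  have hstep : ∀ j ∈ Finset.range (m + 1),
      (((b + j).choose j : ℚ) * coefQ (b + j) (K + 1 - j))
      = ((-1 : ℚ) ^ (K + 1) * ((b + (K + 1)).choose (K + 1) : ℚ))
        * ((-1 : ℚ) ^ j * ((K + 1).choose j : ℚ)) := by
    intro j hj
    simp only [Finset.mem_range] at hj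
    have hjk : j ≤ K + 1 := by omega
    rw [coefQ, show b + j + (K + 1 - j) = b + (K + 1) from by omega,
      neg_one_pow_sub (K + 1) j hjk]
    have ht := trinom b (K + 1) j hjk
    linear_combination ((-1 : ℚ) ^ (K + 1) * (-1 : ℚ) ^ j) * ht
  rw [Finset.sum_congr rfl hstep, ← Finset.mul_sum, alt_sum K m]

/-- The full straightening identity, in `Xel` form. -/
lemma main_id (hEH : e * H2 = H2 * e + e) (hFH : f * H2 = H2 * f - f)
    (hEF : f * e = e * f + 2 * H2 - (d : A)) (hW : Wl H2 0 (d + 1) = 0)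
    (a b c : ℕ) (habc : d < a + b + c) :
    Xel f H2 e a b c = ∑ k ∈ Finset.Icc (a + b + c - d) (min a c),
      ((-1 : ℚ) ^ (k - (a + b + c - d)) *
        ((k - 1).choose (a + b + c - d - 1) : ℚ) * ((b + k).choose k : ℚ)) •
        Xel f H2 e (a - k) (b + k) (c - k) := by
  have hcore := Sel_vanish d e f H2 hEH hFH hEF hW
  by_cases hms : min a c < a + b + c - d
  · rw [Finset.Icc_eq_empty (by omega), Finset.sum_empty]
    rcases le_or_gt c a with h | h
    · exact Xel_vanish_f d e f H2 hFH hW a b c (by omega)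
    · exact Xel_vanish_e d e f H2 hEH hW a b c (by omega)
  · push_neg at hms
    set s := a + b + c - d with hs
    have hs1 : 1 ≤ s := by omega
    -- the vanishing relations
    have key : (0 : A) = ∑ j ∈ Finset.range s,
        (((b + j).choose j : ℚ)) • Sel f H2 e (a - j) (b + j) (c - j) := by
      symm
      apply Finset.sum_eq_zero
      intro j hj
      simp only [Finset.mem_range] at hj
      rw [hcore (c - j) (a - j) (b + j) (by omega), smul_zero]
    -- expand each relation
    have hinner : ∀ j ∈ Finset.range s,
        (((b + j).choose j : ℚ)) • Sel f H2 e (a - j) (b + j) (c - j)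
        = ∑ k ∈ Finset.range (min a c + 1),
          (if j ≤ k then (((b + j).choose j : ℚ) * coefQ (b + j) (k - j)) •
            Xel f H2 e (a - k) (b + k) (c - k) else 0) := by
      intro j hj
      simp only [Finset.mem_range] at hj
      have hja : j ≤ a := by omega
      have hjc : j ≤ c := by omega
      rw [Sel, Finset.smul_sum, show min (a - j) (c - j) = min a c - j from by omega,
        show min a c - j + 1 = min a c + 1 - j from by omega]
      have hflt : Finset.filter (fun k => j ≤ k) (Finset.range (min a c + 1))
          = Finset.Ico j (min a c + 1) := by
        ext k
        simp only [Finset.mem_filter, Finset.mem_range, Finset.mem_Ico]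
        omega
      conv_rhs => rw [← Finset.sum_filter, hflt, Finset.sum_Ico_eq_sum_range]
      refine Finset.sum_congr rfl (fun i _ => ?_)
      simp only [smul_smul, Nat.sub_sub, Nat.add_sub_cancel_left, add_assoc]
    -- pointwise evaluation of the swapped sum
    have hptk : ∀ k ∈ Finset.range (min a c + 1),
        (∑ j ∈ Finset.range s, if j ≤ k then (((b + j).choose j : ℚ) * coefQ (b + j) (k - j)) •
            Xel f H2 e (a - k) (b + k) (c - k) else 0)
        = (if k = 0 then Xel f H2 e a b c else 0)
          + (if s ≤ k then
              (-((-1 : ℚ) ^ (k - s) * ((k - 1).choose (s - 1) : ℚ) * ((b + k).choose k : ℚ))) •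
                Xel f H2 e (a - k) (b + k) (c - k) else 0) := by
      intro k hk
      simp only [Finset.mem_range] at hk
      have hpull : (∑ j ∈ Finset.range s, if j ≤ k then
            (((b + j).choose j : ℚ) * coefQ (b + j) (k - j)) •
              Xel f H2 e (a - k) (b + k) (c - k) else 0)
          = (∑ j ∈ Finset.range s, if j ≤ k then
              (((b + j).choose j : ℚ) * coefQ (b + j) (k - j)) else 0) •
                Xel f H2 e (a - k) (b + k) (c - k) := by
        rw [Finset.sum_smul]
        refine Finset.sum_congr rfl (fun j _ => ?_)
        split_ifs
        · rfl
        · rw [zero_smul]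
      rw [hpull]
      rcases Nat.eq_zero_or_pos k with rfl | hk1
      · have hsum0 : (∑ j ∈ Finset.range s, if j ≤ 0 then
            (((b + j).choose j : ℚ) * coefQ (b + j) (0 - j)) else 0) = 1 := by
          rw [Finset.sum_eq_single_of_mem 0 (Finset.mem_range.mpr (by omega))
            (fun j _ hj0 => by rw [if_neg (by omega)])]
          norm_num [coefQ_zero]
        rw [hsum0, one_smul, if_pos rfl, if_neg (by omega), add_zero]
        norm_num
      · obtain ⟨K, rfl⟩ : ∃ K, k = K + 1 := ⟨k - 1, by omega⟩
        by_cases hks : s ≤ K + 1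
        · have hall : (∑ j ∈ Finset.range s, if j ≤ K + 1 then
              (((b + j).choose j : ℚ) * coefQ (b + j) (K + 1 - j)) else 0)
              = ∑ j ∈ Finset.range ((s - 1) + 1),
                (((b + j).choose j : ℚ) * coefQ (b + j) (K + 1 - j)) := by
            rw [show (s - 1) + 1 = s from by omega]
            exact Finset.sum_congr rfl (fun j hj => by
              simp only [Finset.mem_range] at hj
              rw [if_pos (by omega)])
          rw [hall, gamma_eval b K (s - 1) (by omega)]
          rw [if_neg (by omega), zero_add, if_pos hks]
          congr 1
          rw [show (K + 1 : ℕ) - 1 = K from by omega]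
          rw [neg_one_pow_sub (K + 1) s hks]
          have hps : (-1 : ℚ) ^ s = (-1 : ℚ) ^ (s - 1) * (-1) := by
            rw [← pow_succ, show (s - 1) + 1 = s from by omega]
          rw [hps]
          ring
        · have hshrink : (∑ j ∈ Finset.range s, if j ≤ K + 1 then
              (((b + j).choose j : ℚ) * coefQ (b + j) (K + 1 - j)) else 0)
              = ∑ j ∈ Finset.range ((K + 1) + 1),
                (((b + j).choose j : ℚ) * coefQ (b + j) (K + 1 - j)) := by
            rw [← Finset.sum_subset (Finset.range_subset_range.mpr (by omega : (K + 1) + 1 ≤ s))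
              (fun x hx hnx => by
                simp only [Finset.mem_range] at hx hnx
                rw [if_neg (by omega)])]
            exact Finset.sum_congr rfl (fun j hj => by
              simp only [Finset.mem_range] at hj
              rw [if_pos (by omega)])
          rw [hshrink, gamma_eval b K (K + 1) (le_refl _),
            Nat.choose_eq_zero_of_lt (by omega : K < K + 1)]
          simp only [Nat.cast_zero, mul_zero, zero_mul, zero_smul]
          rw [if_neg (by omega : ¬(K + 1) = 0), if_neg hks, add_zero]
    rw [Finset.sum_congr rfl hinner, Finset.sum_comm, Finset.sum_congr rfl hptk,
      Finset.sum_add_distrib] at key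
    have hfirst : (∑ k ∈ Finset.range (min a c + 1),
        (if k = 0 then Xel f H2 e a b c else 0)) = Xel f H2 e a b c := by
      rw [Finset.sum_ite_eq' (Finset.range (min a c + 1)) 0 (fun _ => Xel f H2 e a b c)]
      rw [if_pos (Finset.mem_range.mpr (by omega))]
    have hsecond : (∑ k ∈ Finset.range (min a c + 1), if s ≤ k then
          (-((-1 : ℚ) ^ (k - s) * ((k - 1).choose (s - 1) : ℚ) * ((b + k).choose k : ℚ))) •
            Xel f H2 e (a - k) (b + k) (c - k) else 0)
        = -∑ k ∈ Finset.Icc s (min a c),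
            ((-1 : ℚ) ^ (k - s) * ((k - 1).choose (s - 1) : ℚ) * ((b + k).choose k : ℚ)) •
              Xel f H2 e (a - k) (b + k) (c - k) := by
      rw [← Finset.sum_filter]
      have hflt2 : Finset.filter (fun k => s ≤ k) (Finset.range (min a c + 1))
          = Finset.Icc s (min a c) := by
        ext k
        simp only [Finset.mem_filter, Finset.mem_range, Finset.mem_Icc]
        omega
      rw [hflt2, ← Finset.sum_neg_distrib]
      exact Finset.sum_congr rfl (fun k _ => by rw [neg_smul])
    rw [hfirst, hsecond] at key
    have := key.symm
    rwa [add_neg_eq_zero] at this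

end Assembly







end BdAux

/-- In `B_d`, for `s = a + b + c - d ≥ 1`:
`f^(a)·binom(H2,b)·e^(c) = Σ_{k=s}^{min(a,c)} (-1)^{k-s} binom(k-1,s-1) binom(b+k,k)
f^(a-k)·binom(H2,b+k)·e^(c-k)`. -/
theorem Bd_reduction (d : ℕ) (A : Type*) [Ring A] [Algebra ℚ A]
    (e f H1 H2 : A)
    (h12 : H1 * H2 = H2 * H1)
    (h1e : H1 * e - e * H1 = e) (h1f : H1 * f - f * H1 = -f)
    (h2e : H2 * e - e * H2 = -e) (h2f : H2 * f - f * H2 = f)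
    (hef : e * f - f * e = H1 - H2)
    (hsum : H1 + H2 = (d : A))
    (hmin : ((List.range (d + 1)).map (fun i : ℕ => H1 - (i : A))).prod = 0)
    (a b c : ℕ) (habc : d < a + b + c) :
    dpow f a * abinom H2 b * dpow e c =
      ∑ k ∈ Finset.Icc (a + b + c - d) (min a c),
        ((-1 : ℚ) ^ (k - (a + b + c - d)) *
          ((k - 1).choose (a + b + c - d - 1) : ℚ) * ((b + k).choose k : ℚ)) •
          (dpow f (a - k) * abinom H2 (b + k) * dpow e (c - k)) := by
  have hEH : e * H2 = H2 * e + e := by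
    have h := h2e
    rw [sub_eq_iff_eq_add] at h
    rw [h]
    abel
  have hFH : f * H2 = H2 * f - f := by
    have h := h2f
    rw [sub_eq_iff_eq_add] at h
    rw [h]
    abel
  have hEF : f * e = e * f + 2 * H2 - (d : A) := by
    have h1 : H1 = (d : A) - H2 := eq_sub_of_add_eq hsum
    have h2 : e * f - f * e = (d : A) - 2 * H2 := by
      rw [hef, h1]
      noncomm_ring
    rw [sub_eq_iff_eq_add] at h2
    rw [h2]
    abel
  have hW : BdAux.Wl H2 0 (d + 1) = 0 := BdAux.hW_of_hmin d H2 H1 hsum hmin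
  exact BdAux.main_id d e f H2 hEH hFH hEF hW a b c habc
end

section
/- In the algebra B_d, if a, b, c are nonnegative integers with a+b+c > d and a < a+b+c-d (equivalently b+c ≥ d+1), then f^(a)·binom(H2,b)·e^(c) = 0. The same holds if c < a+b+c-d. -/
open Polynomial

section BdAux
variable {A : Type*} [Ring A] [Algebra ℚ A]

lemma bd_pow_right (w x : A) (μ : ℚ) (h : w * x = μ • w) (n : ℕ) :
    w * x ^ n = (μ ^ n) • w := by
  induction n with
  | zero => simp
  | succ n ih =>
      rw [pow_succ, ← mul_assoc, ih, smul_mul_assoc, h, smul_smul, ← pow_succ]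

lemma bd_pow_left (x w : A) (μ : ℚ) (h : x * w = μ • w) (n : ℕ) :
    x ^ n * w = (μ ^ n) • w := by
  induction n with
  | zero => simp
  | succ n ih =>
      rw [pow_succ', mul_assoc, ih, mul_smul_comm, h, smul_smul, ← pow_succ]

lemma bd_right_eigen (w x : A) (μ : ℚ) (h : w * x = μ • w) (q : ℚ[X]) :
    w * (aeval x q) = q.eval μ • w := by
  induction q using Polynomial.induction_on' with
  | add p q hp hq => rw [map_add, mul_add, hp, hq, eval_add, add_smul]
  | monomial n r =>
      rw [aeval_monomial, eval_monomial, ← Algebra.smul_def, mul_smul_comm,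
        bd_pow_right w x μ h n, smul_smul]

lemma bd_left_eigen (x w : A) (μ : ℚ) (h : x * w = μ • w) (q : ℚ[X]) :
    (aeval x q) * w = q.eval μ • w := by
  induction q using Polynomial.induction_on' with
  | add p q hp hq => rw [map_add, add_mul, hp, hq, eval_add, add_smul]
  | monomial n r =>
      rw [aeval_monomial, eval_monomial, ← Algebra.smul_def, smul_mul_assoc,
        bd_pow_left x w μ h n, smul_smul]

lemma bd_shift (x y : A) (ε : ℚ) (h : x * y = y * x + ε • x) (n : ℕ) :
    x ^ n * y = y * x ^ n + ((n : ℚ) * ε) • x ^ n := by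
  induction n with
  | zero => simp
  | succ n ih =>
      have h1 : x ^ (n+1) * y = x ^ n * (x * y) := by rw [pow_succ, mul_assoc]
      rw [h1, h, mul_add, ← mul_assoc, ih, mul_smul_comm, ← pow_succ, add_mul,
        smul_mul_assoc, ← pow_succ, mul_assoc, ← pow_succ]
      rw [add_assoc, ← add_smul]
      push_cast
      ring_nf

lemma bd_list_finset_prod {M : Type*} [CommMonoid M] (g : ℕ → M) (n : ℕ) :
    ((List.range n).map g).prod = ∏ j ∈ Finset.range n, g j := by
  induction n with
  | zero => simp
  | succ n ih => rw [List.range_succ, List.map_append, List.prod_append,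
      Finset.prod_range_succ, ih]; simp

/-- triple smul product -/
lemma bd_smul3 (r t u : ℚ) (x y z : A) :
    (r • x) * (t • y) * (u • z) = (r * t * u) • (x * y * z) := by
  simp [smul_mul_assoc, mul_smul_comm, smul_smul, mul_assoc, mul_comm, mul_left_comm]

end BdAux

/-- monic polynomial with roots `0,…,d` -/
noncomputable def bdP (d : ℕ) : ℚ[X] := ∏ j ∈ Finset.range (d + 1), (X - C (j : ℚ))

/-- Lagrange idempotents evaluated at `H1`. -/
noncomputable def bdPi (d : ℕ) {A : Type*} [Ring A] [Algebra ℚ A] (H1 : A) (i : ℕ) : A :=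
  Polynomial.aeval H1 (Lagrange.basis (Finset.range (d + 1)) (Nat.cast : ℕ → ℚ) i)

lemma bdP_eval_ne (d : ℕ) (μ : ℚ) (hμ : μ < 0) : (bdP d).eval μ ≠ 0 := by
  rw [bdP, eval_prod]
  refine Finset.prod_ne_zero_iff.mpr fun j hj => ?_
  simp only [eval_sub, eval_X, eval_C]
  have : (0:ℚ) ≤ (j:ℚ) := Nat.cast_nonneg j
  exact sub_ne_zero.mpr (ne_of_lt (lt_of_lt_of_le hμ this))

section BdMain
variable {A : Type*} [Ring A] [Algebra ℚ A]

lemma bdP_aeval (d : ℕ) (H1 : A)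
    (hmin : ((List.range (d + 1)).map (fun i : ℕ => H1 - (i : A))).prod = 0) :
    Polynomial.aeval H1 (bdP d) = 0 := by
  have h1 : bdP d = ((List.range (d+1)).map (fun j : ℕ => X - C (j:ℚ))).prod :=
    (bd_list_finset_prod _ _).symm
  rw [h1, map_list_prod, List.map_map]
  have h2 : ((Polynomial.aeval H1 : ℚ[X] →ₐ[ℚ] A) ∘ fun j : ℕ => X - C (j:ℚ))
      = fun i : ℕ => H1 - (i : A) := by
    funext j
    simp [map_natCast]
  rw [h2, hmin]

lemma bdPi_sum (d : ℕ) (H1 : A) :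
    ∑ i ∈ Finset.range (d + 1), bdPi d H1 i = 1 := by
  have hinj : Set.InjOn (Nat.cast : ℕ → ℚ) (Finset.range (d+1)) :=
    fun x _ y _ h => Nat.cast_injective h
  have hne : (Finset.range (d+1)).Nonempty := Finset.nonempty_range_iff.mpr (Nat.succ_ne_zero d)
  have := Lagrange.sum_basis hinj hne
  simp only [bdPi]
  rw [← map_sum, this, map_one]

lemma bdPi_comm (d : ℕ) (H1 : A) (i : ℕ) : bdPi d H1 i * H1 = H1 * bdPi d H1 i := by
  rw [bdPi]
  have h1 : Polynomial.aeval H1 (Lagrange.basis (Finset.range (d+1)) (Nat.cast : ℕ → ℚ) i) * H1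
      = Polynomial.aeval H1 (Lagrange.basis (Finset.range (d+1)) (Nat.cast : ℕ → ℚ) i * X) := by
    rw [map_mul, aeval_X]
  rw [h1, mul_comm _ X, map_mul, aeval_X]

lemma bdPi_eig (d : ℕ) (H1 : A)
    (hP : Polynomial.aeval H1 (bdP d) = 0) (i : ℕ) (hi : i ∈ Finset.range (d+1)) :
    H1 * bdPi d H1 i = (i : ℚ) • bdPi d H1 i := by
  have hb : (X - C (i:ℚ)) * Lagrange.basis (Finset.range (d+1)) (Nat.cast : ℕ → ℚ) i
      = C (∏ j ∈ (Finset.range (d+1)).erase i, ((i:ℚ) - (j:ℚ))⁻¹) * bdP d := by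
    simp only [Lagrange.basis, Lagrange.basisDivisor, bdP]
    rw [Finset.prod_mul_distrib, ← map_prod, mul_left_comm,
      Finset.mul_prod_erase _ (fun j : ℕ => X - C (j:ℚ)) hi]
  have h2 := congrArg (Polynomial.aeval H1) hb
  rw [map_mul, map_mul, hP, mul_zero, map_sub, aeval_X, aeval_C] at h2
  rw [sub_mul, ← Algebra.smul_def] at h2
  have := sub_eq_zero.mp h2
  rw [bdPi]
  exact this

end BdMain

/-- In `B_d`, with `s = a + b + c - d ≥ 1`: if `a < s` (equivalently `b + c ≥ d + 1`)
then `f^(a)·binom(H2,b)·e^(c) = 0`, and likewise if `c < s`. -/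
theorem Bd_vanishing (d : ℕ) (A : Type*) [Ring A] [Algebra ℚ A]
    (e f H1 H2 : A)
    (h12 : H1 * H2 = H2 * H1)
    (h1e : H1 * e - e * H1 = e) (h1f : H1 * f - f * H1 = -f)
    (h2e : H2 * e - e * H2 = -e) (h2f : H2 * f - f * H2 = f)
    (hef : e * f - f * e = H1 - H2)
    (hsum : H1 + H2 = (d : A))
    (hmin : ((List.range (d + 1)).map (fun i : ℕ => H1 - (i : A))).prod = 0)
    (a b c : ℕ) (habc : d < a + b + c) :
    (a < a + b + c - d → dpow f a * abinom H2 b * dpow e c = 0) ∧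
    (c < a + b + c - d → dpow f a * abinom H2 b * dpow e c = 0) := by
  have hP : Polynomial.aeval H1 (bdP d) = 0 := bdP_aeval d H1 hmin
  have hkill_right : ∀ (w : A) (μ : ℚ), w * H1 = μ • w → μ < 0 → w = 0 := by
    intro w μ hw hμ
    have h0 := bd_right_eigen w H1 μ hw (bdP d)
    rw [hP, mul_zero] at h0
    exact ((smul_eq_zero.mp h0.symm).resolve_left (bdP_eval_ne d μ hμ))
  have hkill_left : ∀ (w : A) (μ : ℚ), H1 * w = μ • w → μ < 0 → w = 0 := by
    intro w μ hw hμ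
    have h0 := bd_left_eigen H1 w μ hw (bdP d)
    rw [hP, zero_mul] at h0
    exact ((smul_eq_zero.mp h0.symm).resolve_left (bdP_eval_ne d μ hμ))
  have he' : e * H1 = H1 * e + (-1 : ℚ) • e := by
    have h : e * H1 = H1 * e - e := by rw [sub_eq_iff_eq_add.mp h1e]; abel
    rw [neg_one_smul, h, sub_eq_add_neg]
  have hf' : f * H1 = H1 * f + (1 : ℚ) • f := by
    have h : f * H1 - H1 * f = f := by rw [← neg_sub, h1f, neg_neg]
    rw [one_smul, sub_eq_iff_eq_add.mp h, add_comm]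
  have hec := bd_shift e H1 (-1) he' c
  have hfa := bd_shift f H1 1 hf' a
  have hπe : ∀ i ∈ Finset.range (d+1), i < c → bdPi d H1 i * e ^ c = 0 := by
    intro i hi hic
    refine hkill_right _ ((i:ℚ) - (c:ℚ)) ?_ ?_
    · rw [mul_assoc, hec, mul_add, ← mul_assoc, bdPi_comm, bdPi_eig d H1 hP i hi,
        mul_smul_comm, smul_mul_assoc, ← add_smul]
      congr 1
      ring
    · have h' : (i:ℚ) < (c:ℚ) := by exact_mod_cast hic
      linarith
  have hπf : ∀ i ∈ Finset.range (d+1), i < a → f ^ a * bdPi d H1 i = 0 := by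
    intro i hi hia
    refine hkill_left _ ((i:ℚ) - (a:ℚ)) ?_ ?_
    · have hH1fa : H1 * f ^ a = f ^ a * H1 - ((a:ℚ) * 1) • f ^ a := by
        rw [hfa]; abel
      rw [← mul_assoc, hH1fa, sub_mul, smul_mul_assoc, mul_assoc,
        bdPi_eig d H1 hP i hi, mul_smul_comm, ← sub_smul]
      congr 1
      ring
    · have h' : (i:ℚ) < (a:ℚ) := by exact_mod_cast hia
      linarith
  have hH2π : ∀ i ∈ Finset.range (d+1), H2 * bdPi d H1 i = ((d:ℚ) - i) • bdPi d H1 i := by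
    intro i hi
    have h2 : H2 = (d:A) - H1 := by rw [← hsum]; abel
    rw [h2, sub_mul, bdPi_eig d H1 hP i hi, sub_smul]
    congr 1
    rw [Algebra.smul_def, map_natCast]
  have hXb : ∀ i ∈ Finset.range (d+1),
      ((List.range b).map (fun j : ℕ => H2 - (j:A))).prod * bdPi d H1 i
        = (∏ j ∈ Finset.range b, (((d:ℚ) - i) - j)) • bdPi d H1 i := by
    intro i hi
    have hconv : ((List.range b).map (fun j : ℕ => H2 - (j:A))).prod
        = Polynomial.aeval H2 (∏ j ∈ Finset.range b, (X - Polynomial.C (j:ℚ))) := by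
      rw [← bd_list_finset_prod (fun j : ℕ => X - Polynomial.C (j:ℚ)) b,
        map_list_prod, List.map_map]
      have hfun : ((Polynomial.aeval H2 : ℚ[X] →ₐ[ℚ] A) ∘ fun j : ℕ => X - Polynomial.C (j:ℚ))
          = fun j : ℕ => H2 - (j : A) := by
        funext j
        simp [map_natCast]
      rw [hfun]
    rw [hconv, bd_left_eigen H2 _ ((d:ℚ) - i) (hH2π i hi)]
    congr 1
    rw [Polynomial.eval_prod]
    refine Finset.prod_congr rfl fun j _ => ?_
    simp
  have hmain : (∀ i ∈ Finset.range (d+1), i + b ≤ d → f ^ a * bdPi d H1 i * e ^ c = 0) →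
      f ^ a * ((List.range b).map (fun j : ℕ => H2 - (j:A))).prod * e ^ c = 0 := by
    intro hcase
    have h1 : f ^ a * ((List.range b).map (fun j : ℕ => H2 - (j:A))).prod * e ^ c
        = ∑ i ∈ Finset.range (d+1),
            f ^ a * (((List.range b).map (fun j : ℕ => H2 - (j:A))).prod * bdPi d H1 i) * e ^ c := by
      rw [← Finset.sum_mul, ← Finset.mul_sum, ← Finset.mul_sum, bdPi_sum, mul_one]
    rw [h1]
    refine Finset.sum_eq_zero fun i hi => ?_
    rw [hXb i hi, mul_smul_comm, smul_mul_assoc]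
    by_cases hib : i + b ≤ d
    · rw [hcase i hi hib, smul_zero]
    · have hid : i ≤ d := by have := Finset.mem_range.mp hi; omega
      have hmem : d - i ∈ Finset.range b := Finset.mem_range.mpr (by omega)
      have hz : (∏ j ∈ Finset.range b, (((d:ℚ) - i) - j)) = 0 := by
        refine Finset.prod_eq_zero hmem ?_
        have hcast : ((d - i : ℕ) : ℚ) = (d:ℚ) - i := by
          rw [Nat.cast_sub hid]
        rw [hcast]
        ring
      rw [hz, zero_smul]
  constructor
  · intro h
    have hcase : ∀ i ∈ Finset.range (d+1), i + b ≤ d → f ^ a * bdPi d H1 i * e ^ c = 0 := by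
      intro i hi hib
      have hic : i < c := by omega
      rw [mul_assoc, hπe i hi hic, mul_zero]
    have hz := hmain hcase
    simp only [dpow, abinom]
    rw [bd_smul3, hz, smul_zero]
  · intro h
    have hcase : ∀ i ∈ Finset.range (d+1), i + b ≤ d → f ^ a * bdPi d H1 i * e ^ c = 0 := by
      intro i hi hib
      have hia : i < a := by omega
      rw [hπf i hi hia, zero_mul]
    have hz := hmain hcase
    simp only [dpow, abinom]
    rw [bd_smul3, hz, smul_zero]
end

section
/- For integers a ≥ k ≥ s+1 ≥ 1 and b ≥ 0, the identity ((a-s)/a)·binom(b+s,s)·binom(b+k,k-s) - ((a-k)/a)·binom(k-1,s-1)·binom(b+k,k) = binom(k-1,s)·binom(b+k,k) holds in Q. -/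
/-- The binomial coefficient `binom(n, m)` with an integer lower index, extended by `0`
for `m < 0`. -/
def zbinom (n : ℕ) (m : ℤ) : ℚ :=
  if 0 ≤ m then (n.choose m.toNat : ℚ) else 0

/-!
With `C = binom(b+k,k)`, the trinomial revision `binom(b+s,s)·binom(b+k,k-s) = binom(k,s)·C`
turns the left side into `C/a · ((a-s)·binom(k,s) - (a-k)·binom(k-1,s-1))`. Pascal's rule
splits `binom(k,s)`, and the absorption identity `s·binom(k-1,s) = (k-s)·binom(k-1,s-1)`
collapses the bracket to `a·binom(k-1,s)`. Both rules hold for `s = 0` as well once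
`binom(k-1,-1) = 0`, so no case split is needed.
-/

theorem zbinom_natCast (n t : ℕ) : zbinom n t = n.choose t := by
  simp [zbinom]

theorem zbinom_of_neg {n : ℕ} {m : ℤ} (hm : m < 0) : zbinom n m = 0 := by
  simp [zbinom, hm.not_ge]

theorem choose_mul_choose_sub {b k s : ℕ} (hsk : s ≤ k) :
    (b + s).choose s * (b + k).choose (k - s) = k.choose s * (b + k).choose k := by
  have revision := Nat.choose_mul (n := b + k) (k := b + s) (s := b) (Nat.le_add_right b s)
  rw [Nat.add_sub_cancel_left, Nat.add_sub_cancel_left] at revision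
  have symm : (b + k).choose (k - s) = (b + k).choose (b + s) :=
    Nat.choose_symm_of_eq_add (by omega)
  rw [symm, ← Nat.choose_symm_add (a := b) (b := s), ← Nat.choose_symm_add (a := b) (b := k),
    mul_comm, revision, mul_comm]

theorem choose_eq_zbinom_add_choose {k : ℕ} (hk : 0 < k) (s : ℕ) :
    (k.choose s : ℚ) = zbinom (k - 1) ((s : ℤ) - 1) + ((k - 1).choose s : ℚ) := by
  obtain ⟨n, rfl⟩ := Nat.exists_eq_add_of_lt hk
  cases s with
  | zero => simp [zbinom_of_neg]
  | succ t =>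
    rw [show ((t + 1 : ℕ) : ℤ) - 1 = t by push_cast; ring, zbinom_natCast]
    simp [Nat.choose_succ_succ]

theorem zbinom_sub_one_mul_eq_choose_mul (n s : ℕ) :
    zbinom n ((s : ℤ) - 1) * ((n : ℚ) + 1 - s) = (n.choose s : ℚ) * s := by
  cases s with
  | zero => simp [zbinom_of_neg]
  | succ t =>
    rw [show ((t + 1 : ℕ) : ℤ) - 1 = t by push_cast; ring, zbinom_natCast]
    rcases le_or_gt t n with htn | hnt
    · have absorption : (n.choose t : ℚ) * (n - t) = n.choose (t + 1) * (t + 1) := by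
        rw [← Nat.cast_sub htn]
        exact_mod_cast (Nat.choose_succ_right_eq n t).symm
      push_cast
      linear_combination absorption
    · simp [Nat.choose_eq_zero_of_lt hnt, Nat.choose_eq_zero_of_lt (Nat.lt_succ_of_lt hnt)]

/-- For integers `a ≥ k ≥ s+1 ≥ 1`, `b ≥ 0`:
`((a-s)/a)·binom(b+s,s)·binom(b+k,k-s) - ((a-k)/a)·binom(k-1,s-1)·binom(b+k,k)
  = binom(k-1,s)·binom(b+k,k)` in `ℚ`. -/
theorem binom_identity_R (a k s b : ℕ) (hks : s + 1 ≤ k) (hka : k ≤ a) :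
    ((a : ℚ) - s) / a * ((b + s).choose s : ℚ) * ((b + k).choose (k - s) : ℚ)
      - ((a : ℚ) - k) / a * zbinom (k - 1) ((s : ℤ) - 1) * ((b + k).choose k : ℚ)
    = ((k - 1).choose s : ℚ) * ((b + k).choose k : ℚ) := by
  have hk : 0 < k := by omega
  have ha : (a : ℚ) ≠ 0 := Nat.cast_ne_zero.mpr (by omega)
  have revision : ((b + s).choose s : ℚ) * ((b + k).choose (k - s) : ℚ)
      = (k.choose s : ℚ) * ((b + k).choose k : ℚ) := by
    exact_mod_cast choose_mul_choose_sub (by omega)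
  have absorption := zbinom_sub_one_mul_eq_choose_mul (k - 1) s
  rw [Nat.cast_pred hk, sub_add_cancel] at absorption
  rw [mul_assoc _ _ (((b + k).choose (k - s) : ℕ) : ℚ), revision, choose_eq_zbinom_add_choose hk]
  field_simp
  linear_combination ((b + k).choose k : ℚ) * absorption
end
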